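/- arXiv:2211.14116 — 7 statements merged into one kernel-verified Lean document; each statement's English description precedes it below -/
import Mathlib

section
/- Let X be a complex Banach space, T a bounded linear operator on X, and M a closed subspace of X such that T(M) = M. Then M is contained in the analytic core K(T). -/
def analyticCore {X : Type*} [NormedAddCommGroup X] [NormedSpace ℂ X]
    (T : X →L[ℂ] X) : Set X :=
  {x | ∃ δ : ℝ, 0 < δ ∧ ∃ u : ℕ → X, u 0 = x ∧ (∀ n, T (u (n + 1)) = u n) ∧
    ∀ n, ‖u n‖ ≤ δ ^ n * ‖x‖}

theorem subset_analyticCore_of_map_eq {X : Type*} [NormedAddCommGroup X] [NormedSpace ℂ X]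
    [CompleteSpace X] (T : X →L[ℂ] X) (M : Submodule ℂ X) (hM : IsClosed (M : Set X))
    (hTM : Submodule.map (T : X →ₗ[ℂ] X) M = M) :
    (M : Set X) ⊆ analyticCore T := by
  intro x hx
  haveI : CompleteSpace M := hM.completeSpace_coe
  have hmem : ∀ y : X, y ∈ M → T y ∈ M := by
    intro y hy
    rw [← hTM]
    exact ⟨y, hy, rfl⟩
  let S : M →L[ℂ] M :=
    { toLinearMap := (T : X →ₗ[ℂ] X).restrict (fun y hy => hmem y hy),
      cont := Continuous.subtype_mk (T.continuous.comp continuous_subtype_val) _ }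
  have hsurj : Function.Surjective S := by
    rintro ⟨y, hy⟩
    rw [← hTM] at hy
    obtain ⟨z, hz, hzy⟩ := hy
    exact ⟨⟨z, hz⟩, Subtype.ext hzy⟩
  obtain ⟨C, hC, h⟩ := S.exists_preimage_norm_le hsurj
  set f : M → M := fun y => (h y).choose with hf
  have hf1 : ∀ y, S (f y) = y := fun y => (h y).choose_spec.1
  have hf2 : ∀ y, ‖f y‖ ≤ C * ‖y‖ := fun y => (h y).choose_spec.2
  have hδ : (0:ℝ) < max C 1 := lt_of_lt_of_le one_pos (le_max_right _ _)
  refine ⟨max C 1, hδ, fun n => ((f^[n] ⟨x, hx⟩ : M) : X), rfl, ?_, ?_⟩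
  · intro n
    have h1 : f^[n+1] (⟨x,hx⟩ : M) = f (f^[n] ⟨x,hx⟩) := Function.iterate_succ_apply' f n _
    show T ((f^[n+1] (⟨x,hx⟩ : M) : M) : X) = ((f^[n] (⟨x,hx⟩ : M) : M) : X)
    rw [h1]
    exact congrArg Subtype.val (hf1 (f^[n] ⟨x,hx⟩))
  · intro n
    induction n with
    | zero => simp
    | succ n ih =>
      have h1 : f^[n+1] (⟨x,hx⟩ : M) = f (f^[n] ⟨x,hx⟩) := Function.iterate_succ_apply' f n _
      show ‖((f^[n+1] (⟨x,hx⟩ : M) : M) : X)‖ ≤ (max C 1) ^ (n+1) * ‖x‖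
      rw [h1]
      have h3 : ‖(f^[n] (⟨x,hx⟩ : M))‖ = ‖((f^[n] (⟨x,hx⟩ : M) : M) : X)‖ := rfl
      calc ‖((f (f^[n] ⟨x,hx⟩) : M) : X)‖ ≤ C * ‖f^[n] (⟨x,hx⟩ : M)‖ := hf2 _
        _ ≤ max C 1 * (max C 1 ^ n * ‖x‖) := by
            refine mul_le_mul (le_max_left _ _) ?_ (norm_nonneg _) (le_of_lt hδ)
            rw [h3]; exact ih
            
        _ = max C 1 ^ (n+1) * ‖x‖ := by ring
end

section
/- Let X be a complex Banach space and T a quasi-nilpotent bounded linear operator on X (i.e., its spectral radius is zero). Then the analytic core K(T) is the zero subspace: K(T) = {0}. -/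
theorem analyticCore_of_quasinilpotent {X : Type*} [NormedAddCommGroup X] [NormedSpace ℂ X]
    [CompleteSpace X] (T : X →L[ℂ] X) (hT : spectralRadius ℂ T = 0) :
    analyticCore T = {0} := by
  ext x
  simp only [Set.mem_setOf_eq, Set.mem_singleton_iff, analyticCore]
  constructor
  · rintro ⟨δ, hδ, u, hu0, hrec, hbound⟩
    -- (T^n) (u n) = x
    have hpow : ∀ n : ℕ, (T ^ n) (u n) = x := by
      intro n
      induction n with
      | zero => simpa using hu0
      | succ n ih =>
        rw [pow_succ]
        simpa [ContinuousLinearMap.mul_apply, hrec n] using ih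
    by_contra hx
    have hxpos : 0 < ‖x‖ := norm_pos_iff.mpr hx
    -- Gelfand's formula
    have htend := spectrum.pow_norm_pow_one_div_tendsto_nhds_spectralRadius T
    rw [hT] at htend
    have hεpos : (0 : ENNReal) < ENNReal.ofReal (1 / (2 * δ)) := by
      apply ENNReal.ofReal_pos.mpr
      positivity
    have hev : ∀ᶠ n : ℕ in Filter.atTop,
        ENNReal.ofReal (‖T ^ n‖ ^ (1 / n : ℝ)) < ENNReal.ofReal (1 / (2 * δ)) := by
      have := (ENNReal.nhds_zero_basis.tendsto_right_iff).mp htend _ hεpos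
      simpa using this
    obtain ⟨N, hN⟩ := hev.exists_forall_of_atTop
    set n := max N 1 with hn
    have hn1 : 1 ≤ n := le_max_right _ _
    have hnn : (n : ℝ) ≠ 0 := by positivity
    have hlt : ‖T ^ n‖ ^ (1 / n : ℝ) < 1 / (2 * δ) := by
      have := hN n (le_max_left _ _)
      rwa [ENNReal.ofReal_lt_ofReal_iff (by positivity)] at this
    have hTn : ‖T ^ n‖ < (1 / (2 * δ)) ^ n := by
      have h1 : ‖T ^ n‖ = (‖T ^ n‖ ^ (1 / n : ℝ)) ^ n := by
        rw [← Real.rpow_natCast (‖T ^ n‖ ^ (1 / n : ℝ)) n, ← Real.rpow_mul (norm_nonneg _)]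
        rw [one_div, inv_mul_cancel₀ hnn, Real.rpow_one]
      rw [h1]
      exact pow_lt_pow_left₀ hlt (Real.rpow_nonneg (norm_nonneg _) _)
        (by omega)
    have key : ‖x‖ ≤ (1 / 2 : ℝ) ^ n * ‖x‖ := by
      calc ‖x‖ = ‖(T ^ n) (u n)‖ := by rw [hpow n]
        _ ≤ ‖T ^ n‖ * ‖u n‖ := (T ^ n).le_opNorm _
        _ ≤ (1 / (2 * δ)) ^ n * (δ ^ n * ‖x‖) := by
            apply mul_le_mul hTn.le (hbound n) (norm_nonneg _) (by positivity)
        _ = (1 / 2 : ℝ) ^ n * ‖x‖ := by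
            rw [← mul_assoc, ← mul_pow]
            congr 2
            field_simp
    have hhalf : (1 / 2 : ℝ) ^ n < 1 :=
      pow_lt_one₀ (by norm_num) (by norm_num) (by omega)
    nlinarith
  · rintro rfl
    exact ⟨1, one_pos, fun _ => 0, rfl, fun n => by simp, fun n => by simp⟩
end

section
/- Let X be a complex Banach space, x ∈ X a nonzero vector, and f a continuous linear functional on X with f(x) ≠ 0. Then the analytic core of the rank-one operator x ⊗ f equals the one-dimensional subspace spanned by x: K(x⊗f) = span{x}. -/
theorem analyticCore_rankOne_nonnilpotent {X : Type*} [NormedAddCommGroup X] [NormedSpace ℂ X]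
    [CompleteSpace X] (x : X) (hx : x ≠ 0) (f : X →L[ℂ] ℂ) (hfx : f x ≠ 0) :
    analyticCore (f.smulRight x) = (Submodule.span ℂ {x} : Submodule ℂ X) := by
  ext y
  simp only [SetLike.mem_coe, Submodule.mem_span_singleton]
  constructor
  · rintro ⟨δ, hδ, u, hu0, hrec, hb⟩
    refine ⟨f (u 1), ?_⟩
    have h := hrec 0
    rw [hu0] at h
    simpa [ContinuousLinearMap.smulRight_apply] using h
  · rintro ⟨c, rfl⟩
    refine ⟨max 1 (1 / ‖f x‖), lt_of_lt_of_le one_pos (le_max_left _ _),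
      fun n => (c / (f x) ^ n) • x, by simp, ?_, ?_⟩
    · intro n
      simp only [ContinuousLinearMap.smulRight_apply, map_smul, smul_eq_mul, smul_smul]
      congr 1
      field_simp
      ring
    · intro n
      simp only
      rw [norm_smul, norm_smul, norm_div, norm_pow]
      have hfx' : 0 < ‖f x‖ := norm_pos_iff.mpr hfx
      have h1 : (1 / ‖f x‖) ^ n ≤ (max 1 (1 / ‖f x‖)) ^ n :=
        pow_le_pow_left₀ (by positivity) (le_max_right _ _) n
      calc ‖c‖ / ‖f x‖ ^ n * ‖x‖ = (1 / ‖f x‖) ^ n * (‖c‖ * ‖x‖) := by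
            rw [one_div, inv_pow]; ring
        _ ≤ (max 1 (1 / ‖f x‖)) ^ n * (‖c‖ * ‖x‖) :=
            mul_le_mul_of_nonneg_right h1 (by positivity)
end

section
/- Let X be an infinite-dimensional complex Banach space and A, B bounded linear operators on X such that K(AF + FA) = K(BF + FB) for every rank-at-most-one operator F on X, where K denotes the analytic core. Then B = λA for some nonzero scalar λ ∈ ℂ (with the convention that if A = 0 then B = 0). -/
set_option linter.unusedSectionVars false
set_option maxHeartbeats 1000000

namespace ACP

variable {X : Type*} [NormedAddCommGroup X] [NormedSpace ℂ X] [CompleteSpace X]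

noncomputable def pseq (a b c d p q : ℂ) : ℕ → ℂ × ℂ
  | 0 => (p, q)
  | n + 1 =>
    ((d * (pseq a b c d p q n).1 - c * (pseq a b c d p q n).2) / (a * d - b * c),
     (-(b * (pseq a b c d p q n).1) + a * (pseq a b c d p q n).2) / (a * d - b * c))

lemma zero_mem_core (T : X →L[ℂ] X) : (0 : X) ∈ analyticCore T :=
  ⟨1, one_pos, fun _ => 0, rfl, by simp, by simp⟩

lemma mem_core_of_chain (T : X →L[ℂ] X) (v : X) (u : ℕ → X) (C ρ : ℝ)
    (h0 : u 0 = v) (hc : ∀ n, T (u (n + 1)) = u n)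
    (hρ : 0 < ρ) (hb : ∀ n, ‖u n‖ ≤ C * ρ ^ n) : v ∈ analyticCore T := by
  rcases eq_or_ne v 0 with rfl | hv
  · exact zero_mem_core T
  have hvpos : 0 < ‖v‖ := norm_pos_iff.mpr hv
  have hC : 0 ≤ C := by
    have h1 := hb 0
    rw [h0] at h1
    simp only [pow_zero, mul_one] at h1
    linarith
  refine ⟨ρ * (1 + C / ‖v‖), by positivity, u, h0, hc, ?_⟩
  intro n
  cases n with
  | zero => simp [h0]
  | succ n =>
    have ha : C / ‖v‖ ≤ (1 + C / ‖v‖) ^ (n + 1) := by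
      have h2 : C / ‖v‖ ≤ 1 + C / ‖v‖ := by linarith [div_nonneg hC hvpos.le]
      have h3 : (1 : ℝ) + C / ‖v‖ ≤ (1 + C / ‖v‖) ^ (n + 1) :=
        le_self_pow₀ (by linarith [div_nonneg hC hvpos.le]) (Nat.succ_ne_zero n)
      linarith
    have h4 : C ≤ (1 + C / ‖v‖) ^ (n + 1) * ‖v‖ := by
      have := mul_le_mul_of_nonneg_right ha hvpos.le
      rw [div_mul_cancel₀ _ (ne_of_gt hvpos)] at this
      linarith
    calc ‖u (n + 1)‖ ≤ C * ρ ^ (n + 1) := hb _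
      _ ≤ ((1 + C / ‖v‖) ^ (n + 1) * ‖v‖) * ρ ^ (n + 1) := by
          have hpow : (0:ℝ) < ρ ^ (n+1) := pow_pos hρ _
          nlinarith
      _ = (ρ * (1 + C / ‖v‖)) ^ (n + 1) * ‖v‖ := by rw [mul_pow]; ring

lemma eigen_mem_core (T : X →L[ℂ] X) (v : X) (lam : ℂ) (hlam : lam ≠ 0)
    (hv : T v = lam • v) : v ∈ analyticCore T := by
  refine mem_core_of_chain T v (fun n => (lam⁻¹) ^ n • v) ‖v‖ ‖lam⁻¹‖ (by simp) ?_ ?_ ?_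
  · intro n
    simp only [map_smul, hv, smul_smul]
    congr 1
    rw [pow_succ]
    field_simp
  · simpa using inv_ne_zero hlam
  · intro n
    rw [norm_smul, norm_pow]
    ring_nf
    exact le_refl _

lemma exists_eq2_of_mem_core {T : X →L[ℂ] X} {v : X} (hv : v ∈ analyticCore T) :
    ∃ z, T (T z) = v := by
  obtain ⟨δ, -, u, h0, hc, -⟩ := hv
  exact ⟨u 2, by rw [hc 1, hc 0, h0]⟩

lemma pseq_bound (a b c d p q : ℂ) (hΔ : a * d - b * c ≠ 0) (n : ℕ) :
    ‖(pseq a b c d p q n).1‖ + ‖(pseq a b c d p q n).2‖ ≤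
      ((‖a‖ + ‖b‖ + ‖c‖ + ‖d‖) / ‖a * d - b * c‖ + 1) ^ n * (‖p‖ + ‖q‖) := by
  set Δ := a * d - b * c with hΔdef
  have hΔp : 0 < ‖Δ‖ := norm_pos_iff.mpr hΔ
  set K : ℝ := (‖a‖ + ‖b‖ + ‖c‖ + ‖d‖) / ‖Δ‖ + 1 with hK
  induction n with
  | zero => simp [pseq]
  | succ n ih =>
    set p1 := ‖(pseq a b c d p q n).1‖ with hp1
    set p2 := ‖(pseq a b c d p q n).2‖ with hp2
    have hnng : (0:ℝ) ≤ p1 := norm_nonneg _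
    have hnng2 : (0:ℝ) ≤ p2 := norm_nonneg _
    have hrec1 : ‖(pseq a b c d p q (n+1)).1‖ ≤ (‖d‖ * p1 + ‖c‖ * p2) / ‖Δ‖ := by
      show ‖(d * (pseq a b c d p q n).1 - c * (pseq a b c d p q n).2) / Δ‖ ≤ _
      rw [norm_div]
      apply div_le_div_of_nonneg_right ?_ hΔp.le |>.trans_eq rfl
      calc ‖d * (pseq a b c d p q n).1 - c * (pseq a b c d p q n).2‖
          ≤ ‖d * (pseq a b c d p q n).1‖ + ‖c * (pseq a b c d p q n).2‖ := norm_sub_le _ _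
        _ = _ := by rw [norm_mul, norm_mul]
    have hrec2 : ‖(pseq a b c d p q (n+1)).2‖ ≤ (‖b‖ * p1 + ‖a‖ * p2) / ‖Δ‖ := by
      show ‖(-(b * (pseq a b c d p q n).1) + a * (pseq a b c d p q n).2) / Δ‖ ≤ _
      rw [norm_div]
      apply div_le_div_of_nonneg_right ?_ hΔp.le |>.trans_eq rfl
      calc ‖-(b * (pseq a b c d p q n).1) + a * (pseq a b c d p q n).2‖
          ≤ ‖-(b * (pseq a b c d p q n).1)‖ + ‖a * (pseq a b c d p q n).2‖ := norm_add_le _ _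
        _ = _ := by rw [norm_neg, norm_mul, norm_mul]
    have hKpos : (0:ℝ) < K := by positivity
    have expand : (‖d‖ * p1 + ‖c‖ * p2) / ‖Δ‖ + (‖b‖ * p1 + ‖a‖ * p2) / ‖Δ‖ ≤ K * (p1 + p2) := by
      rw [← add_div, div_le_iff₀ hΔp]
      calc ‖d‖ * p1 + ‖c‖ * p2 + (‖b‖ * p1 + ‖a‖ * p2)
          ≤ ((‖a‖ + ‖b‖ + ‖c‖ + ‖d‖) + ‖Δ‖) * (p1 + p2) := by
            nlinarith [mul_nonneg (norm_nonneg a) hnng, mul_nonneg (norm_nonneg b) hnng2,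
              mul_nonneg (norm_nonneg c) hnng, mul_nonneg (norm_nonneg d) hnng2,
              mul_nonneg hΔp.le hnng, mul_nonneg hΔp.le hnng2]
        _ = K * (p1 + p2) * ‖Δ‖ := by
            have hdm : (‖a‖ + ‖b‖ + ‖c‖ + ‖d‖) / ‖Δ‖ * ‖Δ‖ = ‖a‖ + ‖b‖ + ‖c‖ + ‖d‖ :=
              div_mul_cancel₀ _ hΔp.ne'
            have hcancel : ((‖a‖ + ‖b‖ + ‖c‖ + ‖d‖) / ‖Δ‖ + 1) * (p1 + p2) * ‖Δ‖
                = ((‖a‖ + ‖b‖ + ‖c‖ + ‖d‖) + ‖Δ‖) * (p1 + p2) := by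
              calc ((‖a‖ + ‖b‖ + ‖c‖ + ‖d‖) / ‖Δ‖ + 1) * (p1 + p2) * ‖Δ‖
                  = ((‖a‖ + ‖b‖ + ‖c‖ + ‖d‖) / ‖Δ‖ * ‖Δ‖ + ‖Δ‖) * (p1 + p2) := by ring
                _ = _ := by rw [hdm]
            rw [hK, hcancel]
    calc ‖(pseq a b c d p q (n+1)).1‖ + ‖(pseq a b c d p q (n+1)).2‖
        ≤ K * (p1 + p2) := le_trans (add_le_add hrec1 hrec2) expand
      _ ≤ K * (K ^ n * (‖p‖ + ‖q‖)) := mul_le_mul_of_nonneg_left ih hKpos.le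
      _ = K ^ (n+1) * (‖p‖ + ‖q‖) := by rw [pow_succ]; ring

lemma pair_mem_core (T : X →L[ℂ] X) (y z : X) (a b c d : ℂ)
    (hy : T y = a • y + b • z) (hz : T z = c • y + d • z)
    (hΔ : a * d - b * c ≠ 0) (p q : ℂ) : p • y + q • z ∈ analyticCore T := by
  set u : ℕ → X := fun n => (pseq a b c d p q n).1 • y + (pseq a b c d p q n).2 • z with hu
  have h0 : u 0 = p • y + q • z := by simp only [hu]; rfl
  have hc : ∀ n, T (u (n + 1)) = u n := by
    intro n
    have hstep : pseq a b c d p q (n+1) =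
        ((d * (pseq a b c d p q n).1 - c * (pseq a b c d p q n).2) / (a * d - b * c),
         (-(b * (pseq a b c d p q n).1) + a * (pseq a b c d p q n).2) / (a * d - b * c)) := rfl
    simp only [hu, hstep, map_add, map_smul, hy, hz]
    match_scalars
    · field_simp
      have hΔ' : d * a - c * b ≠ 0 := by contrapose! hΔ; linear_combination hΔ
      linear_combination (pseq a b c d p q n).1 * mul_inv_cancel₀ hΔ'
    · field_simp
      have hΔ' : d * a - c * b ≠ 0 := by contrapose! hΔ; linear_combination hΔ
      linear_combination (pseq a b c d p q n).2 * mul_inv_cancel₀ hΔ'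
  refine mem_core_of_chain T _ u ((‖p‖ + ‖q‖) * (‖y‖ + ‖z‖))
    ((‖a‖ + ‖b‖ + ‖c‖ + ‖d‖) / ‖a * d - b * c‖ + 1) h0 hc ?_ ?_
  · have : 0 < ‖a * d - b * c‖ := norm_pos_iff.mpr hΔ
    positivity
  intro n
  have hbnd := pseq_bound a b c d p q hΔ n
  calc ‖u n‖ ≤ ‖(pseq a b c d p q n).1 • y‖ + ‖(pseq a b c d p q n).2 • z‖ := norm_add_le _ _
    _ = ‖(pseq a b c d p q n).1‖ * ‖y‖ + ‖(pseq a b c d p q n).2‖ * ‖z‖ := by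
        rw [norm_smul, norm_smul]
    _ ≤ (‖(pseq a b c d p q n).1‖ + ‖(pseq a b c d p q n).2‖) * (‖y‖ + ‖z‖) := by
        nlinarith [norm_nonneg y, norm_nonneg z, norm_nonneg ((pseq a b c d p q n).1),
          norm_nonneg ((pseq a b c d p q n).2)]
    _ ≤ (((‖a‖ + ‖b‖ + ‖c‖ + ‖d‖) / ‖a * d - b * c‖ + 1) ^ n * (‖p‖ + ‖q‖)) * (‖y‖ + ‖z‖) :=
        mul_le_mul_of_nonneg_right hbnd (by positivity)
    _ = (‖p‖ + ‖q‖) * (‖y‖ + ‖z‖) * ((‖a‖ + ‖b‖ + ‖c‖ + ‖d‖) / ‖a * d - b * c‖ + 1) ^ n := by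
        ring

lemma exists_dual_family {n : ℕ} (v : Fin n → X) (hv : LinearIndependent ℂ v) (c : Fin n → ℂ) :
    ∃ f : X →L[ℂ] ℂ, ∀ i, f (v i) = c i := by
  set p : Submodule ℂ X := Submodule.span ℂ (Set.range v) with hp
  haveI : FiniteDimensional ℂ p := FiniteDimensional.span_of_finite ℂ (Set.finite_range v)
  let b : Module.Basis (Fin n) ℂ p := Module.Basis.span hv
  let g : p →ₗ[ℂ] ℂ := (b.constr ℂ) c
  let g' : p →L[ℂ] ℂ := LinearMap.toContinuousLinearMap g
  obtain ⟨f, hf, -⟩ := exists_extension_norm_eq p g'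
  refine ⟨f, fun i => ?_⟩
  have h1 : ((b i : p) : X) = v i := congrArg Subtype.val (Module.Basis.span_apply hv i)
  have h2 : f ((b i : p) : X) = g' (b i) := hf (b i)
  rw [h1] at h2
  rw [h2]
  show g (b i) = c i
  exact b.constr_basis ℂ c i

lemma exists_dual_one (x : X) (hx : x ≠ 0) (c : ℂ) : ∃ f : X →L[ℂ] ℂ, f x = c := by
  obtain ⟨g, -, hg⟩ := exists_dual_vector ℂ x (norm_ne_zero_iff.mpr hx)
  refine ⟨(c / (‖x‖ : ℂ)) • g, ?_⟩
  have hn : (‖x‖ : ℂ) ≠ 0 := by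
    simpa using norm_ne_zero_iff.mpr hx
  simp only [ContinuousLinearMap.smul_apply, hg, smul_eq_mul]
  field_simp
  rfl

lemma exists_dual_pair (x y : X) (hxy : ∀ s t : ℂ, s • x + t • y = 0 → s = 0 ∧ t = 0)
    (c₁ c₂ : ℂ) : ∃ f : X →L[ℂ] ℂ, f x = c₁ ∧ f y = c₂ := by
  obtain ⟨f, hf⟩ := exists_dual_family ![x, y] (LinearIndependent.pair_iff.mpr hxy) ![c₁, c₂]
  exact ⟨f, by simpa using hf 0, by simpa using hf 1⟩

lemma exists_dual_triple (x y w : X) (hxy : ∀ s t : ℂ, s • x + t • y = 0 → s = 0 ∧ t = 0)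
    (hw : w ∉ Submodule.span ℂ {x, y}) (c₁ c₂ c₃ : ℂ) :
    ∃ f : X →L[ℂ] ℂ, f x = c₁ ∧ f y = c₂ ∧ f w = c₃ := by
  have hpair : LinearIndependent ℂ ![x, y] := LinearIndependent.pair_iff.mpr hxy
  have hr : Set.range ![x, y] = {x, y} := by
    simp only [Matrix.range_cons, Matrix.range_empty, Set.union_empty, Set.union_singleton]
    exact Set.pair_comm y x
  have htr : LinearIndependent ℂ (Fin.cons w ![x, y] : Fin 3 → X) :=
    linearIndependent_fin_cons.mpr ⟨hpair, by rwa [hr]⟩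
  obtain ⟨f, hf⟩ := exists_dual_family _ htr ![c₃, c₁, c₂]
  refine ⟨f, ?_, ?_, ?_⟩
  · have := hf 1
    simpa using this
  · have := hf 2
    simpa using this
  · have := hf 0
    simpa using this

lemma exists_quad_root (c d : ℂ) (hcd : ¬(c = 0 ∧ d = 0)) :
    ∃ γ : ℂ, γ ≠ 0 ∧ γ ^ 2 = c + d * γ := by
  by_cases hc : c = 0
  · have hd : d ≠ 0 := fun hd => hcd ⟨hc, hd⟩
    exact ⟨d, hd, by rw [hc]; ring⟩
  · obtain ⟨e, he⟩ := IsAlgClosed.exists_pow_nat_eq (k := ℂ) (d ^ 2 + 4 * c) (n := 2) (by norm_num)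
    refine ⟨(d + e) / 2, ?_, ?_⟩
    · intro h0
      have he2 : e = -d := by
        field_simp at h0
        linear_combination h0
      rw [he2] at he
      apply hc
      linear_combination (he.symm) / 4
    · linear_combination he / 4


lemma op_apply (A : X →L[ℂ] X) (f : X →L[ℂ] ℂ) (x z : X) :
    (A * f.smulRight x + f.smulRight x * A) z = f z • A x + f (A z) • x := by
  simp [ContinuousLinearMap.mul_apply, ContinuousLinearMap.smulRight_apply, map_smul]

lemma exists_eq1_of_mem_core {T : X →L[ℂ] X} {v : X} (hv : v ∈ analyticCore T) :
    ∃ z, T z = v := by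
  obtain ⟨δ, -, u, h0, hc, -⟩ := hv
  exact ⟨u 1, by rw [hc 0, h0]⟩

lemma dep_cases (x y : X) (hnind : ¬ ∀ s t : ℂ, s • x + t • y = 0 → s = 0 ∧ t = 0) :
    x = 0 ∨ ∃ k : ℂ, y = k • x := by
  by_cases hx : x = 0
  · exact Or.inl hx
  right
  rcases not_forall.mp hnind with ⟨s, hs⟩
  rcases not_forall.mp hs with ⟨t, hst⟩
  rcases _root_.not_imp.mp hst with ⟨heq, hne⟩
  by_cases ht : t = 0
  · exfalso
    have hs0 : s ≠ 0 := fun h0 => hne ⟨h0, ht⟩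
    have h1 : s • x = 0 := by simpa [ht] using heq
    exact hx ((smul_eq_zero.mp h1).resolve_left hs0)
  · refine ⟨-(s / t), ?_⟩
    have h1 : t • y = -(s • x) := by
      calc t • y = (s • x + t • y) - s • x := by abel
        _ = 0 - s • x := by rw [heq]
        _ = -(s • x) := by abel
    calc y = t⁻¹ • (t • y) := by rw [smul_smul, inv_mul_cancel₀ ht, one_smul]
      _ = t⁻¹ • (-(s • x)) := by rw [h1]
      _ = (-(s / t)) • x := by
          rw [smul_neg, smul_smul, ← neg_smul]
          congr 1
          field_simp

lemma ker_lem (A B : X →L[ℂ] X)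
    (h : ∀ (x : X) (f : X →L[ℂ] ℂ),
      analyticCore (A * f.smulRight x + f.smulRight x * A) =
        analyticCore (B * f.smulRight x + f.smulRight x * B))
    (x : X) (hAx : A x = 0) : B x = 0 := by
  by_contra hBx
  have hx0 : x ≠ 0 := by
    rintro rfl
    exact hBx (map_zero B)
  have hKA : ∀ (f : X →L[ℂ] ℂ) (w : X),
      w ∈ analyticCore (A * f.smulRight x + f.smulRight x * A) → w = 0 := by
    intro f w hw
    obtain ⟨z, hz⟩ := exists_eq2_of_mem_core hw
    have hTz : (A * f.smulRight x + f.smulRight x * A) z = f (A z) • x := by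
      rw [op_apply, hAx]
      simp
    have hTx : (A * f.smulRight x + f.smulRight x * A) x = 0 := by
      rw [op_apply, hAx]
      simp
    rw [hTz, map_smul, hTx, smul_zero] at hz
    exact hz.symm
  by_cases hind : ∀ s t : ℂ, s • x + t • B x = 0 → s = 0 ∧ t = 0
  · obtain ⟨f, hf1, hf2⟩ := exists_dual_pair x (B x) hind 0 1
    set S := B * f.smulRight x + f.smulRight x * B with hS
    have hy : S x = (1:ℂ) • x + (0:ℂ) • B x := by
      rw [hS, op_apply, hf1, hf2]
      module
    have hzz : S (B x) = f (B (B x)) • x + (1:ℂ) • B x := by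
      rw [hS, op_apply, hf2]
      module
    have hmem := pair_mem_core S x (B x) 1 0 (f (B (B x))) 1 hy hzz (by norm_num) 0 1
    rw [hS, ← h x f] at hmem
    have h0 := hKA f _ hmem
    apply hBx
    simpa using h0
  · rcases dep_cases x (B x) hind with h0 | ⟨k, hk⟩
    · exact hx0 h0
    have hk0 : k ≠ 0 := by
      rintro rfl
      rw [zero_smul] at hk
      exact hBx hk
    obtain ⟨f, hf⟩ := exists_dual_one x hx0 1
    have hfBx : f (B x) = k := by rw [hk, map_smul, hf, smul_eq_mul, mul_one]
    set S := B * f.smulRight x + f.smulRight x * B with hS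
    have hSx : S x = (2 * k) • x := by
      rw [hS, op_apply, hf, hfBx, hk]
      match_scalars
      ring
    have hxm : x ∈ analyticCore S :=
      eigen_mem_core S x (2 * k) (mul_ne_zero two_ne_zero hk0) hSx
    rw [hS, ← h x f] at hxm
    exact hx0 (hKA f x hxm)

lemma scalar_lem (A B : X →L[ℂ] X)
    (h : ∀ (x : X) (f : X →L[ℂ] ℂ),
      analyticCore (A * f.smulRight x + f.smulRight x * A) =
        analyticCore (B * f.smulRight x + f.smulRight x * B))
    (x : X) (k : ℂ) (hAx : A x = k • x) : ∃ m : ℂ, B x = m • x := by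
  by_cases hx0 : x = 0
  · exact ⟨0, by simp [hx0]⟩
  by_cases hind : ∀ s t : ℂ, s • x + t • B x = 0 → s = 0 ∧ t = 0
  · exfalso
    obtain ⟨f, hf1, hf2⟩ := exists_dual_pair x (B x) hind 0 1
    set S := B * f.smulRight x + f.smulRight x * B with hS
    have hy : S x = (1:ℂ) • x + (0:ℂ) • B x := by
      rw [hS, op_apply, hf1, hf2]
      module
    have hzz : S (B x) = f (B (B x)) • x + (1:ℂ) • B x := by
      rw [hS, op_apply, hf2]
      module
    have hmem := pair_mem_core S x (B x) 1 0 (f (B (B x))) 1 hy hzz (by norm_num) 0 1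
    rw [hS, ← h x f] at hmem
    have hBxm : B x ∈ analyticCore (A * f.smulRight x + f.smulRight x * A) := by
      simpa using hmem
    obtain ⟨z, hz⟩ := exists_eq1_of_mem_core hBxm
    rw [op_apply, hAx] at hz
    have hrep : B x = (f z * k + f (A z)) • x := by
      rw [← hz]
      match_scalars
      ring
    have := (hind (f z * k + f (A z)) (-1) (by rw [hrep]; match_scalars <;> ring)).2
    simp at this
  · rcases dep_cases x (B x) hind with h0 | ⟨m, hm⟩
    · exact absurd h0 hx0
    · exact ⟨m, hm⟩

lemma key_lem (A B : X →L[ℂ] X)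
    (h : ∀ (x : X) (f : X →L[ℂ] ℂ),
      analyticCore (A * f.smulRight x + f.smulRight x * A) =
        analyticCore (B * f.smulRight x + f.smulRight x * B))
    (x : X) (hx : ∀ s t : ℂ, s • x + t • A x = 0 → s = 0 ∧ t = 0)
    (hA2 : A (A x) ≠ 0) (α β : ℂ) (hB : B x = α • x + β • A x) (hβ : β ≠ 0) : α = 0 := by
  obtain ⟨γ, hγ, f, hf1, hf2, hf3⟩ :
      ∃ γ : ℂ, γ ≠ 0 ∧ ∃ f : X →L[ℂ] ℂ, f x = 1 ∧ f (A x) = γ ∧ f (A (A x)) = γ ^ 2 := by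
    by_cases hmem : A (A x) ∈ Submodule.span ℂ {x, A x}
    · obtain ⟨c, d, hcd⟩ := Submodule.mem_span_pair.mp hmem
      have hcd0 : ¬(c = 0 ∧ d = 0) := by
        rintro ⟨rfl, rfl⟩
        apply hA2
        rw [← hcd]
        simp
      obtain ⟨γ, hγ, hroot⟩ := exists_quad_root c d hcd0
      obtain ⟨f, hf1, hf2⟩ := exists_dual_pair x (A x) hx 1 γ
      refine ⟨γ, hγ, f, hf1, hf2, ?_⟩
      rw [← hcd, map_add, map_smul, map_smul, hf1, hf2, smul_eq_mul, smul_eq_mul, hroot]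
      ring
    · obtain ⟨f, hf1, hf2, hf3⟩ := exists_dual_triple x (A x) (A (A x)) hx hmem 1 1 1
      exact ⟨1, one_ne_zero, f, hf1, hf2, by rw [hf3]; norm_num⟩
  set T := A * f.smulRight x + f.smulRight x * A with hT
  set S := B * f.smulRight x + f.smulRight x * B with hS
  have hTapp : ∀ z, T z = f z • A x + f (A z) • x := fun z => op_apply A f x z
  have hSapp : ∀ z, S z = f z • B x + f (B z) • x := fun z => op_apply B f x z
  have hTv : T (γ • x + A x) = (2 * γ) • (γ • x + A x) := by
    rw [hTapp]
    have e1 : f (γ • x + A x) = 2 * γ := by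
      simp only [map_add, map_smul, hf1, hf2, smul_eq_mul]
      ring
    have e2 : f (A (γ • x + A x)) = 2 * γ ^ 2 := by
      simp only [map_add, map_smul, hf2, hf3, smul_eq_mul]
      ring
    rw [e1, e2]
    match_scalars <;> ring
  have hvK : (γ • x + A x) ∈ analyticCore T :=
    eigen_mem_core T _ (2 * γ) (mul_ne_zero two_ne_zero hγ) hTv
  have hTup : ∀ w ∈ analyticCore T, ∃ m : ℂ, w = m • (γ • x + A x) := by
    intro w hw
    obtain ⟨z, hz⟩ := exists_eq2_of_mem_core hw
    refine ⟨f z * γ + f (A z), ?_⟩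
    rw [← hz, hTapp z, hTapp]
    simp only [map_add, map_smul, hf1, hf2, hf3, smul_eq_mul]
    match_scalars <;> ring
  set μ : ℂ := α + β * γ with hμ
  have hfBx : f (B x) = μ := by
    rw [hB]
    simp only [map_add, map_smul, hf1, hf2, smul_eq_mul]
    rw [hμ]
    ring
  have hSx : S x = μ • x + (1 : ℂ) • B x := by
    rw [hSapp, hf1, hfBx]
    module
  have hSBx : S (B x) = f (B (B x)) • x + μ • B x := by
    rw [hSapp, hfBx]
    module
  by_cases hdet : μ * μ - 1 * f (B (B x)) = 0
  · have hρ : f (B (B x)) = μ * μ := by linear_combination -hdet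
    have hvS : (γ • x + A x) ∈ analyticCore S := by
      rw [hS, ← h x f, ← hT]
      exact hvK
    obtain ⟨z, hz⟩ := exists_eq2_of_mem_core hvS
    set k : ℂ := f (B z) + f z * μ with hk
    have hvk : γ • x + A x = k • (μ • x + B x) := by
      rw [← hz, hSapp z, hSapp]
      simp only [map_add, map_smul, hf1, hfBx, hρ, smul_eq_mul, hk]
      match_scalars <;> ring
    have hvk2 : (γ - k * (μ + α)) • x + (1 - k * β) • A x = 0 := by
      have hexp : (γ - k * (μ + α)) • x + (1 - k * β) • A x
          = (γ • x + A x) - k • (μ • x + (α • x + β • A x)) := by module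
      rw [hexp, ← hB, ← hvk, sub_self]
    obtain ⟨e1, e2⟩ := hx _ _ hvk2
    have h2α : (2 : ℂ) * α = 0 := by
      have h5 : β * γ - (k * β) * (μ + α) = 0 := by linear_combination β * e1
      have h6 : k * β = 1 := by linear_combination -e2
      rw [h6, one_mul, hμ] at h5
      linear_combination -h5
    exact (mul_eq_zero.mp h2α).resolve_left two_ne_zero
  · have hxS : x ∈ analyticCore S := by
      have hmem := pair_mem_core S x (B x) μ 1 (f (B (B x))) μ hSx hSBx hdet 1 0
      simpa using hmem
    have hxT : x ∈ analyticCore T := by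
      rw [hT, h x f, ← hS]
      exact hxS
    obtain ⟨m, hm⟩ := hTup x hxT
    have hco : (1 - m * γ) • x + (-m) • A x = 0 := by
      have hexp : (1 - m * γ) • x + (-m) • A x = x - m • (γ • x + A x) := by module
      rw [hexp, ← hm, sub_self]
    obtain ⟨e1, e2⟩ := hx _ _ hco
    exfalso
    have hm0 : m = 0 := by linear_combination -e2
    rw [hm0] at e1
    simp at e1

lemma indep_case (A B : X →L[ℂ] X)
    (h : ∀ (x : X) (f : X →L[ℂ] ℂ),
      analyticCore (A * f.smulRight x + f.smulRight x * A) =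
        analyticCore (B * f.smulRight x + f.smulRight x * B))
    (x : X) (hx : ∀ s t : ℂ, s • x + t • A x = 0 → s = 0 ∧ t = 0) :
    ∃ β : ℂ, B x = β • A x := by
  have hsymm : ∀ (x : X) (f : X →L[ℂ] ℂ),
      analyticCore (B * f.smulRight x + f.smulRight x * B) =
        analyticCore (A * f.smulRight x + f.smulRight x * A) := fun x f => (h x f).symm
  have hx0 : x ≠ 0 := by
    rintro rfl
    have := (hx 1 0 (by simp)).1
    simp at this
  have hxB : ∀ s t : ℂ, s • x + t • B x = 0 → s = 0 ∧ t = 0 := by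
    by_contra hind
    rcases dep_cases x (B x) hind with h0 | ⟨k, hk⟩
    · exact hx0 h0
    obtain ⟨f, hf1, hf2⟩ := exists_dual_pair x (A x) hx 0 1
    set T := A * f.smulRight x + f.smulRight x * A with hT
    have hy : T x = (1:ℂ) • x + (0:ℂ) • A x := by
      rw [hT, op_apply, hf1, hf2]
      module
    have hzz : T (A x) = f (A (A x)) • x + (1:ℂ) • A x := by
      rw [hT, op_apply, hf2]
      module
    have hmem := pair_mem_core T x (A x) 1 0 (f (A (A x))) 1 hy hzz (by norm_num) 0 1
    rw [hT, h x f] at hmem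
    have hAxm : A x ∈ analyticCore (B * f.smulRight x + f.smulRight x * B) := by
      simpa using hmem
    obtain ⟨z, hz⟩ := exists_eq1_of_mem_core hAxm
    rw [op_apply, hk] at hz
    have hrep : A x = (f z * k + f (B z)) • x := by
      rw [← hz]
      match_scalars
      ring
    have := (hx (f z * k + f (B z)) (-1) (by rw [hrep]; match_scalars <;> ring)).2
    simp at this
  obtain ⟨f, hf1, hf2⟩ := exists_dual_pair x (B x) hxB 0 1
  set S := B * f.smulRight x + f.smulRight x * B with hS
  have hy : S x = (1:ℂ) • x + (0:ℂ) • B x := by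
    rw [hS, op_apply, hf1, hf2]
    module
  have hzz : S (B x) = f (B (B x)) • x + (1:ℂ) • B x := by
    rw [hS, op_apply, hf2]
    module
  have hmem := pair_mem_core S x (B x) 1 0 (f (B (B x))) 1 hy hzz (by norm_num) 0 1
  rw [hS, ← h x f] at hmem
  have hBxm : B x ∈ analyticCore (A * f.smulRight x + f.smulRight x * A) := by
    simpa using hmem
  obtain ⟨z, hz⟩ := exists_eq1_of_mem_core hBxm
  rw [op_apply] at hz
  set α : ℂ := f (A z) with hα
  set β : ℂ := f z with hβdef
  have hB : B x = α • x + β • A x := by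
    rw [← hz]
    module
  have hβ : β ≠ 0 := by
    intro h0
    rw [h0, zero_smul, add_zero] at hB
    have := (hxB α (-1) (by rw [hB]; match_scalars <;> ring)).2
    simp at this
  by_cases hA2 : A (A x) = 0
  · by_cases hα0 : α = 0
    · exact ⟨β, by rw [hB, hα0, zero_smul, zero_add]⟩
    · exfalso
      have hBAx : B (A x) = 0 := ker_lem A B h (A x) hA2
      have hBx0 : B x ≠ 0 := by
        intro h0
        have := (hxB 0 1 (by rw [h0]; simp)).2
        simp at this
      have hBBx : B (B x) = α • B x := by
        conv_lhs => rw [hB]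
        rw [map_add, map_smul, map_smul, hBAx, smul_zero, add_zero]
      have hBB0 : B (B x) ≠ 0 := by
        rw [hBBx]
        exact smul_ne_zero hα0 hBx0
      have hArep : A x = (-(α / β)) • x + (1 / β) • B x := by
        rw [hB]
        match_scalars <;> field_simp <;> ring
      have hres := key_lem B A hsymm x hxB hBB0 (-(α / β)) (1 / β) hArep
        (one_div_ne_zero hβ)
      apply hα0
      have hdiv : α / β = 0 := by linear_combination -hres
      exact (div_eq_zero_iff.mp hdiv).resolve_right hβ
  · have hα0 := key_lem A B h x hx hA2 α β hB hβ
    exact ⟨β, by rw [hB, hα0, zero_smul, zero_add]⟩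

lemma pointwise (A B : X →L[ℂ] X)
    (h : ∀ (x : X) (f : X →L[ℂ] ℂ),
      analyticCore (A * f.smulRight x + f.smulRight x * A) =
        analyticCore (B * f.smulRight x + f.smulRight x * B))
    (x : X) : ∃ μ : ℂ, B x = μ • A x := by
  by_cases hx : ∀ s t : ℂ, s • x + t • A x = 0 → s = 0 ∧ t = 0
  · exact indep_case A B h x hx
  · rcases dep_cases x (A x) hx with h0 | ⟨k, hk⟩
    · exact ⟨0, by simp [h0]⟩
    by_cases hk0 : k = 0
    · refine ⟨0, ?_⟩
      rw [zero_smul]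
      exact ker_lem A B h x (by rw [hk, hk0, zero_smul])
    · obtain ⟨m, hm⟩ := scalar_lem A B h x k hk
      refine ⟨m / k, ?_⟩
      rw [hm, hk, smul_smul]
      congr 1
      field_simp

end ACP


open ACP in
theorem linearly_dependent_of_analyticCore_eq {X : Type*} [NormedAddCommGroup X]
    [NormedSpace ℂ X] [CompleteSpace X] (hX : ¬ FiniteDimensional ℂ X)
    (A B : X →L[ℂ] X)
    (h : ∀ (x : X) (f : X →L[ℂ] ℂ),
      analyticCore (A * f.smulRight x + f.smulRight x * A) =
        analyticCore (B * f.smulRight x + f.smulRight x * B)) :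
    ∃ lam : ℂ, lam ≠ 0 ∧ B = lam • A := by
  classical
  by_cases hA : A = 0
  · have hB : B = 0 := by
      ext y
      have := ker_lem A B h y (by rw [hA]; rfl)
      simpa using this
    exact ⟨1, one_ne_zero, by rw [hA, hB, smul_zero]⟩
  · obtain ⟨x₀, hx₀⟩ : ∃ x₀, A x₀ ≠ 0 := by
      by_contra hc
      push_neg at hc
      exact hA (by ext y; simpa using hc y)
    obtain ⟨μ₀, hμ₀⟩ := pointwise A B h x₀
    have hall : ∀ y, B y = μ₀ • A y := by
      intro y
      by_cases hAy : A y = 0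
      · rw [hAy, smul_zero]
        exact ker_lem A B h y hAy
      · obtain ⟨μy, hμy⟩ := pointwise A B h y
        by_cases hind : ∀ s t : ℂ, s • A x₀ + t • A y = 0 → s = 0 ∧ t = 0
        · obtain ⟨μ', hμ'⟩ := pointwise A B h (x₀ + y)
          have hcomb : (μ' - μ₀) • A x₀ + (μ' - μy) • A y = 0 := by
            have h1 : B x₀ + B y = μ' • (A x₀ + A y) := by
              rw [← map_add, ← map_add, hμ']
            rw [hμ₀, hμy] at h1
            have hexp : (μ' - μ₀) • A x₀ + (μ' - μy) • A y
                = μ' • (A x₀ + A y) - (μ₀ • A x₀ + μy • A y) := by module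
            rw [hexp, ← h1, sub_self]
          obtain ⟨e1, e2⟩ := hind _ _ hcomb
          rw [hμy]
          congr 1
          linear_combination e1 - e2
        · rcases dep_cases (A x₀) (A y) hind with h0 | ⟨k, hk⟩
          · exact absurd h0 hx₀
          have hzero : A (y - k • x₀) = 0 := by
            rw [map_sub, map_smul, hk, sub_self]
          obtain ⟨μz, hμz⟩ := pointwise A B h (y - k • x₀)
          have hBz : B (y - k • x₀) = 0 := by
            rw [hμz, hzero, smul_zero]
          have hBy : B y = k • B x₀ := by
            have := hBz
            rw [map_sub, map_smul, sub_eq_zero] at this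
            exact this
          rw [hBy, hμ₀, hk]
          rw [smul_comm]
    have hBA : B = μ₀ • A := by
      ext y
      simpa using hall y
    by_cases hμ : μ₀ = 0
    · exfalso
      have hsymm : ∀ (x : X) (f : X →L[ℂ] ℂ),
          analyticCore (B * f.smulRight x + f.smulRight x * B) =
            analyticCore (A * f.smulRight x + f.smulRight x * A) := fun x f => (h x f).symm
      have hB0 : B x₀ = 0 := by rw [hall x₀, hμ, zero_smul]
      exact hx₀ (ker_lem B A hsymm x₀ hB0)
    · exact ⟨μ₀, hμ, hBA⟩
end

section
/- Let X be an infinite-dimensional complex Banach space and φ : B(X) → B(X) a surjective map satisfying K(φ(T)φ(S) + φ(S)φ(T)) = K(TS + ST) for all T, S ∈ B(X), where K denotes the analytic core. Then φ(0) = 0, and more generally φ(R) = 0 if and only if R = 0. -/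
lemma analyticCore_zero {X : Type*} [NormedAddCommGroup X] [NormedSpace ℂ X] :
    analyticCore (0 : X →L[ℂ] X) = {0} := by
  ext x
  constructor
  · rintro ⟨δ, hδ, u, hu0, hrec, hnorm⟩
    have := hrec 0
    simp only [ContinuousLinearMap.zero_apply] at this
    simp [← hu0, ← this]
  · rintro rfl
    exact ⟨1, one_pos, fun _ => 0, rfl, fun n => by simp, fun n => by simp⟩

lemma half_eigen_mem_core {X : Type*} [NormedAddCommGroup X] [NormedSpace ℂ X]
    (A : X →L[ℂ] X) (x : X) (hAx : A x = (2⁻¹ : ℂ) • x) : x ∈ analyticCore A := by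
  refine ⟨2, two_pos, fun n => (2 : ℂ) ^ n • x, by simp, fun n => ?_, fun n => ?_⟩
  · rw [map_smul, hAx, smul_smul, pow_succ]
    ring_nf
  · rw [norm_smul, norm_pow]
    norm_num

lemma core_forces_zero {X : Type*} [NormedAddCommGroup X] [NormedSpace ℂ X]
    [CompleteSpace X] (R : X →L[ℂ] X)
    (h : ∀ A : X →L[ℂ] X, analyticCore (A * R + R * A) = {0}) : R = 0 := by
  ext x
  simp only [ContinuousLinearMap.zero_apply]
  by_contra hx
  have hx0 : x ≠ 0 := fun h0 => hx (by simp [h0])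
  -- construct T with (T*R + R*T) x = (1/2) • x
  obtain ⟨T, hT⟩ : ∃ T : X →L[ℂ] X, (T * R + R * T) x = (2⁻¹ : ℂ) • x := by
    by_cases hc : ∃ c : ℂ, R x = c • x
    · obtain ⟨c, hcx⟩ := hc
      have hc0 : c ≠ 0 := by rintro rfl; simp at hcx; exact hx hcx
      refine ⟨(4 * c)⁻¹ • (1 : X →L[ℂ] X), ?_⟩
      simp only [ContinuousLinearMap.add_apply, ContinuousLinearMap.mul_apply,
        ContinuousLinearMap.smul_apply, ContinuousLinearMap.one_apply, hcx, map_smul]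
      rw [smul_smul, smul_smul, ← add_smul]
      congr 1
      field_simp
      ring
    · set S : Submodule ℂ X := Submodule.span ℂ {x}
      haveI : IsClosed (S : Set X) := Submodule.closed_of_finiteDimensional S
      let π : X →L[ℂ] (X ⧸ S) := S.mkQ.mkContinuous 1 (fun m => by
        simpa using Submodule.Quotient.norm_mk_le S m)
      have hπx : π x = 0 := by
        simpa [π] using (Submodule.Quotient.mk_eq_zero S).2
          (Submodule.mem_span_singleton_self x)
      have hπRx : π (R x) ≠ 0 := by
        intro h0
        refine hc ?_
        have : R x ∈ S := (Submodule.Quotient.mk_eq_zero S).1 h0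
        obtain ⟨a, ha⟩ := Submodule.mem_span_singleton.1 this
        exact ⟨a, ha.symm⟩
      obtain ⟨f, hf⟩ := SeparatingDual.exists_eq_one (R := ℂ) hπRx
      refine ⟨(f.comp π).smulRight ((2⁻¹ : ℂ) • x), ?_⟩
      simp [ContinuousLinearMap.mul_apply, hf, hπx]
  have := h T
  have hxmem : x ∈ analyticCore (T * R + R * T) := half_eigen_mem_core _ x hT
  rw [this] at hxmem
  exact hx0 hxmem

theorem phi_zero_iff {X : Type*} [NormedAddCommGroup X] [NormedSpace ℂ X]
    [CompleteSpace X] (hX : ¬ FiniteDimensional ℂ X)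
    (phi : (X →L[ℂ] X) → (X →L[ℂ] X)) (hsurj : Function.Surjective phi)
    (hpres : ∀ T S : X →L[ℂ] X,
      analyticCore (phi T * phi S + phi S * phi T) = analyticCore (T * S + S * T)) :
    phi 0 = 0 ∧ ∀ R : X →L[ℂ] X, phi R = 0 ↔ R = 0 := by
  have hphi0 : phi 0 = 0 := by
    refine core_forces_zero _ (fun A => ?_)
    obtain ⟨T, rfl⟩ := hsurj A
    rw [hpres T 0]
    simpa using analyticCore_zero (X := X)
  refine ⟨hphi0, fun R => ⟨fun hR => ?_, fun hR => hR ▸ hphi0⟩⟩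
  refine core_forces_zero _ (fun A => ?_)
  have := hpres A R
  rw [hR] at this
  rw [← this]
  simpa using analyticCore_zero (X := X)
end

section
/- Let X be an infinite-dimensional complex Banach space and φ : B(X) → B(X) a surjective map satisfying K(φ(T)φ(S) + φ(S)φ(T)) = K(TS + ST) for all T, S ∈ B(X). Then for every rank-one operator F there exists a nonzero scalar λ_F ∈ ℂ such that φ(F) = λ_F F. -/
set_option maxHeartbeats 1000000

section B
variable {X : Type*} [NormedAddCommGroup X] [NormedSpace ℂ X]

def Indep (a b : X) : Prop := ∀ s t : ℂ, s • a + t • b = 0 → s = 0 ∧ t = 0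

lemma Indep.symm {a b : X} (h : Indep a b) : Indep b a := by
  intro s t hst
  have := h t s (by rw [add_comm]; exact hst)
  exact ⟨this.2, this.1⟩

lemma Indep.ne_zero_left {a b : X} (h : Indep a b) : a ≠ 0 := by
  intro ha
  have := (h 1 0 (by simp [ha])).1
  simp at this

lemma exists_dual_pair {a b : X} (h : Indep a b) :
    ∃ φ ψ : X →L[ℂ] ℂ, φ a = 1 ∧ φ b = 0 ∧ ψ a = 0 ∧ ψ b = 1 := by
  obtain ⟨f₁, hf₁⟩ := SeparatingDual.exists_eq_one (R := ℂ) h.ne_zero_left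
  have hc : b - (f₁ b) • a ≠ 0 := by
    intro h0
    have h0' : (f₁ b) • a + (-1 : ℂ) • b = 0 := by
      have he : (f₁ b) • a + (-1 : ℂ) • b = -(b - f₁ b • a) := by module
      rw [he, h0, neg_zero]
    exact absurd (h _ _ h0').2 (by norm_num)
  obtain ⟨f₂, hf₂⟩ := SeparatingDual.exists_eq_one (R := ℂ) hc
  rw [map_sub, map_smul, smul_eq_mul] at hf₂
  refine ⟨f₁ - (f₁ b) • (f₂ - (f₂ a) • f₁), f₂ - (f₂ a) • f₁, ?_, ?_, ?_, ?_⟩ <;>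
      simp only [ContinuousLinearMap.sub_apply, ContinuousLinearMap.smul_apply, smul_eq_mul]
  · linear_combination (1 + f₁ b * f₂ a) * hf₁
  · linear_combination (-(f₁ b)) * hf₂
  · linear_combination (-(f₂ a)) * hf₁
  · linear_combination hf₂

end B


lemma indep_of_not_mem_span {X : Type*} [NormedAddCommGroup X] [NormedSpace ℂ X]
    {x y : X} (hx : x ≠ 0) (hy : y ∉ Submodule.span ℂ {x}) :
    Indep x y := by
  intro s t hst
  rcases eq_or_ne t 0 with ht | ht
  · subst ht
    simp only [smul_zero, zero_smul, add_zero] at hst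
    rcases smul_eq_zero.1 hst with h | h
    · exact ⟨h, rfl⟩
    · exact absurd h hx
  · exfalso
    apply hy
    have h1 : t • y = -(s • x) := eq_neg_of_add_eq_zero_right hst
    refine Submodule.mem_span_singleton.2 ⟨-s * t⁻¹, ?_⟩
    apply smul_right_injective X ht
    have h2 : t * (-s * t⁻¹) = -s := by field_simp
    show t • ((-s * t⁻¹) • x) = t • y
    rw [smul_smul, h2, neg_smul, ← h1]

section C
variable {X : Type*} [NormedAddCommGroup X] [NormedSpace ℂ X]

lemma span_pair_subset_core
    (A : X →L[ℂ] X) (a b : X) (p q : X →L[ℂ] ℂ)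
    (hA : ∀ z, A z = p z • a + q z • b)
    (hind : Indep a b)
    (hdet : p a * q b - p b * q a ≠ 0) :
    (Submodule.span ℂ {a, b} : Set X) ⊆ analyticCore A := by
  obtain ⟨φ, ψ, hφa, hφb, hψa, hψb⟩ := exists_dual_pair hind
  intro z hz
  obtain ⟨α, β, hz⟩ := Submodule.mem_span_pair.1 hz
  set pa := p a with hpa; set pb := p b with hpb; set qa := q a with hqa; set qb := q b with hqb
  set D := pa * qb - pb * qa with hD
  set P : ℕ → ℂ × ℂ := fun n => Nat.rec (α, β)
    (fun _ prev => (D⁻¹ * (qb * prev.1 - pb * prev.2),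
                    D⁻¹ * (-qa * prev.1 + pa * prev.2))) n with hP
  have hP0a : (P 0).1 = α := rfl
  have hP0b : (P 0).2 = β := rfl
  have hPs1 : ∀ n, (P (n+1)).1 = D⁻¹ * (qb * (P n).1 - pb * (P n).2) := fun n => rfl
  have hPs2 : ∀ n, (P (n+1)).2 = D⁻¹ * (-qa * (P n).1 + pa * (P n).2) := fun n => rfl
  set u : ℕ → X := fun n => (P n).1 • a + (P n).2 • b with hu
  have hun : ∀ n, u n = (P n).1 • a + (P n).2 • b := fun n => rfl
  have hu0 : u 0 = z := by rw [hun, hP0a, hP0b]; exact hz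
  have happ : ∀ s t : ℂ, A (s • a + t • b) = (s * pa + t * pb) • a + (s * qa + t * qb) • b := by
    intro s t
    rw [hA]
    simp only [map_add, map_smul, smul_eq_mul]
    try module
  have hrec : ∀ n, A (u (n + 1)) = u n := by
    intro n
    show A ((P (n+1)).1 • a + (P (n+1)).2 • b) = (P n).1 • a + (P n).2 • b
    rw [hPs1, hPs2, happ]
    have e1 : D⁻¹ * (qb * (P n).1 - pb * (P n).2) * pa
        + D⁻¹ * (-qa * (P n).1 + pa * (P n).2) * pb = (P n).1 := by
      field_simp
      ring
    have e2 : D⁻¹ * (qb * (P n).1 - pb * (P n).2) * qa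
        + D⁻¹ * (-qa * (P n).1 + pa * (P n).2) * qb = (P n).2 := by
      field_simp
      ring
    rw [e1, e2]
  set E : ℝ := ‖(D⁻¹ : ℂ)‖ * (‖pa‖ + ‖pb‖ + ‖qa‖ + ‖qb‖) + 1 with hE
  have hE1 : 1 ≤ E := by
    rw [hE]
    have : 0 ≤ ‖(D⁻¹ : ℂ)‖ * (‖pa‖ + ‖pb‖ + ‖qa‖ + ‖qb‖) := by positivity
    linarith
  have hEpos : 0 < E := lt_of_lt_of_le one_pos hE1
  set m0 : ℝ := ‖α‖ + ‖β‖ with hm0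
  have hm0nn : 0 ≤ m0 := by positivity
  have hbound : ∀ n, ‖(P n).1‖ ≤ E ^ n * m0 ∧ ‖(P n).2‖ ≤ E ^ n * m0 := by
    intro n
    induction n with
    | zero =>
      constructor
      · rw [hP0a]; simp only [pow_zero, one_mul, hm0]
        have : (0:ℝ) ≤ ‖β‖ := norm_nonneg _
        linarith
      · rw [hP0b]; simp only [pow_zero, one_mul, hm0]
        have : (0:ℝ) ≤ ‖α‖ := norm_nonneg _
        linarith
    | succ n ih =>
      have hEn : (0:ℝ) ≤ E ^ n := by positivity
      have key : ∀ c d : ℂ, ‖c‖ + ‖d‖ ≤ ‖pa‖ + ‖pb‖ + ‖qa‖ + ‖qb‖ →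
          ‖D⁻¹ * (c * (P n).1 + d * (P n).2)‖ ≤ E ^ (n+1) * m0 := by
        intro c d hcd
        have h1 : ‖D⁻¹ * (c * (P n).1 + d * (P n).2)‖
            ≤ ‖(D⁻¹ : ℂ)‖ * (‖c‖ * ‖(P n).1‖ + ‖d‖ * ‖(P n).2‖) := by
          rw [norm_mul]
          apply mul_le_mul_of_nonneg_left _ (norm_nonneg _)
          calc ‖c * (P n).1 + d * (P n).2‖ ≤ ‖c * (P n).1‖ + ‖d * (P n).2‖ := norm_add_le _ _
            _ = ‖c‖ * ‖(P n).1‖ + ‖d‖ * ‖(P n).2‖ := by rw [norm_mul, norm_mul]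
        have h2 : ‖c‖ * ‖(P n).1‖ + ‖d‖ * ‖(P n).2‖ ≤ (‖c‖ + ‖d‖) * (E ^ n * m0) := by
          have i1 := ih.1; have i2 := ih.2
          nlinarith [norm_nonneg c, norm_nonneg d, norm_nonneg (P n).1, norm_nonneg (P n).2]
        have h3 : ‖(D⁻¹ : ℂ)‖ * (‖c‖ + ‖d‖) ≤ E := by
          have h4 : ‖(D⁻¹ : ℂ)‖ * (‖c‖ + ‖d‖)
              ≤ ‖(D⁻¹ : ℂ)‖ * (‖pa‖ + ‖pb‖ + ‖qa‖ + ‖qb‖) :=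
            mul_le_mul_of_nonneg_left hcd (norm_nonneg _)
          linarith
        have hnn : 0 ≤ E ^ n * m0 := by positivity
        calc ‖D⁻¹ * (c * (P n).1 + d * (P n).2)‖
            ≤ ‖(D⁻¹ : ℂ)‖ * ((‖c‖ + ‖d‖) * (E ^ n * m0)) :=
              le_trans h1 (mul_le_mul_of_nonneg_left h2 (norm_nonneg _))
          _ = (‖(D⁻¹ : ℂ)‖ * (‖c‖ + ‖d‖)) * (E ^ n * m0) := by ring
          _ ≤ E * (E ^ n * m0) := mul_le_mul_of_nonneg_right h3 hnn
          _ = E ^ (n+1) * m0 := by ring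
      constructor
      · rw [hPs1, show qb * (P n).1 - pb * (P n).2 = qb * (P n).1 + (-pb) * (P n).2 by ring]
        refine key qb (-pb) ?_
        rw [norm_neg]
        have : (0:ℝ) ≤ ‖pa‖ := norm_nonneg _
        have : (0:ℝ) ≤ ‖qa‖ := norm_nonneg _
        linarith
      · rw [hPs2]
        refine key (-qa) pa ?_
        rw [norm_neg]
        have : (0:ℝ) ≤ ‖pb‖ := norm_nonneg _
        have : (0:ℝ) ≤ ‖qb‖ := norm_nonneg _
        linarith
  set C : ℝ := ‖φ‖ + ‖ψ‖ with hC
  set M : ℝ := ‖a‖ + ‖b‖ with hM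
  have hCnn : 0 ≤ C := by positivity
  have hMnn : 0 ≤ M := by positivity
  have hα : α = φ z := by
    rw [← hz]
    simp only [map_add, map_smul, hφa, hφb, smul_eq_mul]
    ring
  have hβ : β = ψ z := by
    rw [← hz]
    simp only [map_add, map_smul, hψa, hψb, smul_eq_mul]
    ring
  have hm0z : m0 ≤ C * ‖z‖ := by
    rw [hm0, hα, hβ, hC]
    have := φ.le_opNorm z
    have := ψ.le_opNorm z
    nlinarith [norm_nonneg z]
  have hun2 : ∀ n, ‖u n‖ ≤ E ^ n * m0 * M := by
    intro n
    rw [hun]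
    have h1 := (hbound n).1
    have h2 := (hbound n).2
    calc ‖(P n).1 • a + (P n).2 • b‖ ≤ ‖(P n).1 • a‖ + ‖(P n).2 • b‖ := norm_add_le _ _
      _ = ‖(P n).1‖ * ‖a‖ + ‖(P n).2‖ * ‖b‖ := by rw [norm_smul, norm_smul]
      _ ≤ E ^ n * m0 * M := by
          rw [hM]
          nlinarith [norm_nonneg a, norm_nonneg b, norm_nonneg (P n).1, norm_nonneg (P n).2,
            pow_nonneg (le_of_lt hEpos) n]
  refine ⟨E * (C * M + 1), by positivity, u, hu0, hrec, ?_⟩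
  intro n
  match n with
  | 0 => rw [hu0]; simp
  | (n+1) =>
    have h1 := hun2 (n+1)
    have hEn1 : (0:ℝ) ≤ E ^ (n+1) := by positivity
    have h2 : E ^ (n+1) * m0 * M ≤ E ^ (n+1) * (C * M) * ‖z‖ := by
      calc E ^ (n+1) * m0 * M ≤ E ^ (n+1) * (C * ‖z‖) * M := by
            apply mul_le_mul_of_nonneg_right _ hMnn
            exact mul_le_mul_of_nonneg_left hm0z hEn1
        _ = E ^ (n+1) * (C * M) * ‖z‖ := by ring
    have h3 : C * M ≤ (C * M + 1) ^ (n+1) := by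
      have : C * M + 1 ≤ (C * M + 1) ^ (n+1) :=
        le_self_pow₀ (by nlinarith) (Nat.succ_ne_zero n)
      nlinarith
    have h4 : E ^ (n+1) * (C * M) * ‖z‖ ≤ (E * (C * M + 1)) ^ (n+1) * ‖z‖ := by
      rw [mul_pow]
      apply mul_le_mul_of_nonneg_right _ (norm_nonneg z)
      calc E ^ (n+1) * (C * M) ≤ E ^ (n+1) * (C * M + 1) ^ (n+1) :=
            mul_le_mul_of_nonneg_left h3 hEn1
        _ = E ^ (n+1) * (C * M + 1) ^ (n+1) := rfl
    linarith

end C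

section D
variable {X : Type*} [NormedAddCommGroup X] [NormedSpace ℂ X]

lemma zero_mem_core (T : X →L[ℂ] X) : (0 : X) ∈ analyticCore T := by
  refine ⟨1, one_pos, fun _ => 0, rfl, fun n => by simp, fun n => by simp⟩

lemma smul_mem_core {T : X →L[ℂ] X} {v : X} (hv : v ∈ analyticCore T) (a : ℂ) :
    a • v ∈ analyticCore T := by
  obtain ⟨δ, hδ, u, hu0, hrec, hbd⟩ := hv
  refine ⟨δ, hδ, fun n => a • u n, by simp [hu0], fun n => by simp only []; rw [map_smul, hrec],
    fun n => ?_⟩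
  rw [norm_smul, norm_smul]
  calc ‖a‖ * ‖u n‖ ≤ ‖a‖ * (δ ^ n * ‖v‖) := mul_le_mul_of_nonneg_left (hbd n) (norm_nonneg a)
    _ = δ ^ n * (‖a‖ * ‖v‖) := by ring

lemma eigen_mem_core {T : X →L[ℂ] X} {v : X} {μ : ℂ} (hμ : μ ≠ 0) (h : T v = μ • v) :
    v ∈ analyticCore T := by
  refine ⟨max ‖(μ⁻¹ : ℂ)‖ 1, lt_of_lt_of_le one_pos (le_max_right _ _),
    fun n => (μ⁻¹) ^ n • v, by simp, fun n => ?_, fun n => ?_⟩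
  · simp only []
    rw [map_smul, h, smul_smul, pow_succ, mul_assoc, inv_mul_cancel₀ hμ, mul_one]
  · simp only []
    rw [norm_smul, norm_pow]
    apply mul_le_mul_of_nonneg_right _ (norm_nonneg v)
    exact pow_le_pow_left₀ (norm_nonneg _) (le_max_left _ _) n

lemma core_exists_one {T : X →L[ℂ] X} {z : X} (hz : z ∈ analyticCore T) : ∃ y, T y = z := by
  obtain ⟨δ, hδ, u, hu0, hrec, hbd⟩ := hz
  exact ⟨u 1, by rw [hrec 0, hu0]⟩

lemma core_exists_two {T : X →L[ℂ] X} {z : X} (hz : z ∈ analyticCore T) :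
    ∃ y, T (T y) = z := by
  obtain ⟨δ, hδ, u, hu0, hrec, hbd⟩ := hz
  exact ⟨u 2, by rw [hrec 1, hrec 0, hu0]⟩

lemma core_exists_three {T : X →L[ℂ] X} {z : X} (hz : z ∈ analyticCore T) :
    ∃ y, T (T (T y)) = z := by
  obtain ⟨δ, hδ, u, hu0, hrec, hbd⟩ := hz
  exact ⟨u 3, by rw [hrec 2, hrec 1, hrec 0, hu0]⟩

lemma classify {x : X} (hx : x ≠ 0) {k : X →L[ℂ] ℂ} {C : X →L[ℂ] X}
    (hC : ∀ z, C z = k z • x) (T : X →L[ℂ] X) :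
    (k (T x) = 0 ∧ analyticCore (C*T + T*C) = {0}) ∨
    (k (T x) * k (T x) - k (T (T x)) * k x = 0 ∧ k (T x) ≠ 0 ∧ k x ≠ 0 ∧
      k (k (T x) • x + k x • (T x)) ≠ 0 ∧
      analyticCore (C*T + T*C)
        = (Submodule.span ℂ {k (T x) • x + k x • (T x)} : Set X)) ∨
    (k (T x) * k (T x) - k (T (T x)) * k x ≠ 0 ∧ (k x = 0 → k (T x) ≠ 0) ∧ Indep x (T x) ∧
      analyticCore (C*T + T*C) = (Submodule.span ℂ {x, T x} : Set X)) := by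
  set A := C*T + T*C with hAdef
  have e : ∀ z, A z = k (T z) • x + k z • (T x) := by
    intro z
    rw [hAdef]
    simp only [ContinuousLinearMap.add_apply, ContinuousLinearMap.mul_apply, hC, map_smul]
  set t := k (T x) with hst
  set bb := k (T (T x)) with hsb
  set c := k x with hsc
  have e1 : ∀ z, k (A z) = k (T z) * c + k z * t := by
    intro z
    rw [e]
    simp only [map_add, map_smul, smul_eq_mul, ← hsc, ← hst]
  have e2 : ∀ z, k (T (A z)) = k (T z) * t + k z * bb := by
    intro z
    rw [e]
    simp only [map_add, map_smul, smul_eq_mul, ← hst, ← hsb]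
  by_cases hdet : t * t - bb * c = 0
  · by_cases ht : t = 0
    · left
      refine ⟨ht, ?_⟩
      have hbc : bb * c = 0 := by linear_combination -hdet + t * ht
      have hA3 : ∀ y, A (A (A y)) = 0 := by
        intro y
        rw [e (A (A y)), e2 (A y), e1 (A y), e2 y, e1 y]
        rw [show (k (T y) * t + k y * bb) * t + (k (T y) * c + k y * t) * bb = 0 by
          linear_combination (k (T y) * t + 2 * k y * bb) * ht + k (T y) * hbc]
        rw [show (k (T y) * t + k y * bb) * c + (k (T y) * c + k y * t) * t = 0 by
          linear_combination (2 * k (T y) * c + k y * t) * ht + k y * hbc]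
        simp
      apply Set.eq_singleton_iff_unique_mem.2
      refine ⟨zero_mem_core A, fun z hz => ?_⟩
      obtain ⟨y, hy⟩ := core_exists_three hz
      rw [hA3 y] at hy
      exact hy.symm
    · right; left
      have hc : c ≠ 0 := by
        intro hc0
        apply ht
        have : t * t = 0 := by linear_combination hdet + bb * hc0
        exact (mul_self_eq_zero).1 this
      have heig : A (t • x + c • (T x)) = (2*t) • (t • x + c • (T x)) := by
        rw [e]
        simp only [map_add, map_smul, smul_eq_mul, ← hst, ← hsb, ← hsc]
        rw [show t * t + c * bb = 2 * t * t by linear_combination -hdet,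
          show t * c + c * t = 2 * t * c by ring]
        module
      have hkv : k (t • x + c • (T x)) ≠ 0 := by
        rw [map_add, map_smul, map_smul, smul_eq_mul, smul_eq_mul, ← hsc, ← hst]
        intro h0
        exact mul_ne_zero ht hc (by linear_combination h0 / 2)
      refine ⟨hdet, ht, hc, hkv, ?_⟩
      · apply Set.Subset.antisymm
        · intro z hz
          obtain ⟨y, hy⟩ := core_exists_two hz
          refine Submodule.mem_span_singleton.2 ⟨(k (T y) * t + k y * bb) * t⁻¹, ?_⟩
          rw [← hy, e (A y), e2 y, e1 y]
          rw [smul_add, smul_smul, smul_smul]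
          rw [show (k (T y) * t + k y * bb) * t⁻¹ * t = k (T y) * t + k y * bb by
            field_simp]
          rw [show (k (T y) * t + k y * bb) * t⁻¹ * c = k (T y) * c + k y * t by
            field_simp
            linear_combination (-(k y)) * hdet]
        · intro z hz
          obtain ⟨a, ha⟩ := Submodule.mem_span_singleton.1 hz
          rw [← ha]
          exact smul_mem_core (eigen_mem_core (mul_ne_zero two_ne_zero ht) heig) a
  · right; right
    have hind : Indep x (T x) := by
      intro s s' h
      rcases eq_or_ne s' 0 with hs' | hs'
      · subst hs'
        simp only [zero_smul, add_zero] at h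
        rcases smul_eq_zero.1 h with h | h
        · exact ⟨h, rfl⟩
        · exact absurd h hx
      · exfalso
        apply hdet
        have hTx : T x = (-s * s'⁻¹) • x := by
          have h1 : s' • (T x) = -(s • x) := eq_neg_of_add_eq_zero_right h
          apply smul_right_injective X hs'
          show s' • T x = s' • ((-s * s'⁻¹) • x)
          rw [smul_smul]
          rw [show s' * (-s * s'⁻¹) = -s by field_simp, neg_smul, ← h1]
        have ht' : t = (-s * s'⁻¹) * c := by
          rw [hst, hTx]
          simp only [map_smul, smul_eq_mul, ← hsc]
        have hb' : bb = (-s * s'⁻¹) * ((-s * s'⁻¹) * c) := by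
          rw [hsb, hTx]
          simp only [map_smul, smul_eq_mul, ← hst]
          rw [ht']
        rw [ht', hb']
        ring
    refine ⟨hdet, ?_, hind, ?_⟩
    · intro hc0
      intro ht0
      apply hdet
      rw [ht0, hc0]
      ring
    · apply Set.Subset.antisymm
      · intro z hz
        obtain ⟨y, hy⟩ := core_exists_one hz
        exact Submodule.mem_span_pair.2 ⟨k (T y), k y, by rw [← hy, e]⟩
      · refine span_pair_subset_core A x (T x) (k.comp T) k (fun z => by
          rw [e]; rfl) hind ?_
        simpa using hdet

end D

section E
variable {X : Type*} [NormedAddCommGroup X] [NormedSpace ℂ X]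

lemma realize {x : X} {k : X →L[ℂ] ℂ} {C : X →L[ℂ] X} (hC : ∀ z, C z = k z • x)
    (u : X) (hu : k u = 1) (h : X →L[ℂ] ℂ) (hhx : h x = 1)
    (w : X) (gt : X →L[ℂ] ℂ) (hcon : gt x = k w) :
    ∃ T : X →L[ℂ] X, T x = w ∧ (∀ z, k (T z) = gt z) ∧
      ∀ z, (C*T + T*C) z = gt z • x + k z • w := by
  set T : X →L[ℂ] X := h.smulRight w + (gt - (k w) • h).smulRight u with hT
  have hTz : ∀ z, T z = h z • w + (gt z - k w * h z) • u := by
    intro z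
    rw [hT]
    simp [ContinuousLinearMap.smulRight_apply, ContinuousLinearMap.sub_apply,
      ContinuousLinearMap.smul_apply, smul_eq_mul]
  have hTx : T x = w := by
    rw [hTz, hhx, hcon]
    simp
  have hkT : ∀ z, k (T z) = gt z := by
    intro z
    rw [hTz]
    simp only [map_add, map_smul, smul_eq_mul, hu]
    ring
  refine ⟨T, hTx, hkT, fun z => ?_⟩
  have : (C*T + T*C) z = k (T z) • x + k z • (T x) := by
    simp only [ContinuousLinearMap.add_apply, ContinuousLinearMap.mul_apply, hC, map_smul]
  rw [this, hkT, hTx]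

lemma no_two_indep_in_line {v z₁ z₂ : X} (h1 : z₁ ∈ Submodule.span ℂ {v})
    (h2 : z₂ ∈ Submodule.span ℂ {v}) (hind : Indep z₁ z₂) : False := by
  obtain ⟨a₁, ha₁⟩ := Submodule.mem_span_singleton.1 h1
  obtain ⟨a₂, ha₂⟩ := Submodule.mem_span_singleton.1 h2
  have : a₂ • z₁ + (-a₁) • z₂ = 0 := by
    rw [← ha₁, ← ha₂, smul_smul, smul_smul]
    module
  obtain ⟨h01, h02⟩ := hind _ _ this
  apply hind.ne_zero_left
  have ha0 : a₁ = 0 := neg_eq_zero.1 h02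
  rw [← ha₁, ha0, zero_smul]

lemma dline {x : X} (hx : x ≠ 0) {k : X →L[ℂ] ℂ} {C : X →L[ℂ] X}
    (hC : ∀ z, C z = k z • x) (T : X →L[ℂ] X) {z : X} (hz : z ≠ 0)
    (h : analyticCore (C*T+T*C) = (Submodule.span ℂ {z} : Set X)) :
    k z ≠ 0 ∧ k x ≠ 0 := by
  rcases classify hx hC T with ⟨_, h0⟩ | ⟨_, _, hkx, hkv, hv⟩ | ⟨_, hw, hind, hsp⟩
  · exfalso
    apply hz
    have : z ∈ analyticCore (C*T+T*C) := by
      rw [h]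
      exact Submodule.mem_span_singleton_self z
    rw [h0] at this
    exact this
  · set v := k (T x) • x + k x • (T x) with hvdef
    have hzsp : z ∈ (Submodule.span ℂ {v} : Set X) := by
      rw [← hv, h]
      exact Submodule.mem_span_singleton_self z
    obtain ⟨a, ha⟩ := Submodule.mem_span_singleton.1 hzsp
    have ha0 : a ≠ 0 := by
      intro h0
      apply hz
      rw [← ha, h0, zero_smul]
    constructor
    · rw [← ha, map_smul, smul_eq_mul]
      exact mul_ne_zero ha0 hkv
    · exact hkx
  · exfalso
    have hxm : x ∈ (Submodule.span ℂ {z} : Set X) := by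
      rw [← h, hsp]
      exact Submodule.subset_span (by simp)
    have hwm : T x ∈ (Submodule.span ℂ {z} : Set X) := by
      rw [← h, hsp]
      exact Submodule.subset_span (by simp)
    exact no_two_indep_in_line hxm hwm hind

lemma dplane' {x : X} (hx : x ≠ 0) {k : X →L[ℂ] ℂ} {C : X →L[ℂ] X}
    (hC : ∀ z, C z = k z • x) (T : X →L[ℂ] X) {z₁ z₂ : X} (hind : Indep z₁ z₂)
    (h1 : z₁ ∈ analyticCore (C*T+T*C)) (h2 : z₂ ∈ analyticCore (C*T+T*C)) :
    x ∈ analyticCore (C*T+T*C) ∧ ∃ w ∈ analyticCore (C*T+T*C), k w ≠ 0 := by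
  rcases classify hx hC T with ⟨_, h0⟩ | ⟨_, _, _, _, hv⟩ | ⟨_, hw, hindxw, hsp⟩
  · exfalso
    apply hind.ne_zero_left
    rw [h0] at h1
    exact h1
  · exfalso
    rw [hv] at h1 h2
    exact no_two_indep_in_line h1 h2 hind
  · rw [hsp]
    constructor
    · exact Submodule.subset_span (by simp)
    · by_cases hkx : k x = 0
      · exact ⟨T x, Submodule.subset_span (by simp), hw hkx⟩
      · exact ⟨x, Submodule.subset_span (by simp), hkx⟩

lemma fd_of_ker_quot {W : Submodule ℂ X} (h1 : FiniteDimensional ℂ W)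
    (h2 : FiniteDimensional ℂ (X ⧸ W)) : FiniteDimensional ℂ X := by
  have := Module.rank_lt_aleph0_iff.2 h1
  have := Module.rank_lt_aleph0_iff.2 h2
  apply Module.rank_lt_aleph0_iff.1
  rw [← Submodule.rank_quotient_add_rank W]
  exact Cardinal.add_lt_aleph0 ‹_› ‹_›

lemma exists_not_mem (hX : ¬ FiniteDimensional ℂ X) (W : Submodule ℂ X)
    [FiniteDimensional ℂ W] : ∃ y, y ∉ W := by
  by_contra h
  push_neg at h
  have htop : W = ⊤ := eq_top_iff.2 fun z _ => h z
  apply hX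
  have : FiniteDimensional ℂ (⊤ : Submodule ℂ X) := htop ▸ ‹_›
  exact Submodule.topEquiv.finiteDimensional

lemma exists_ker_ker_not_span (hX : ¬ FiniteDimensional ℂ X)
    (f g : X →ₗ[ℂ] ℂ) (x : X) :
    ∃ y : X, f y = 0 ∧ g y = 0 ∧ y ∉ Submodule.span ℂ {x} := by
  by_contra h
  push_neg at h
  have hle : LinearMap.ker (f.prod g) ≤ Submodule.span ℂ {x} := by
    intro y hy
    rw [LinearMap.mem_ker, LinearMap.prod_apply] at hy
    have hf : f y = 0 := congrArg Prod.fst hy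
    have hg : g y = 0 := congrArg Prod.snd hy
    exact h y hf hg
  have h1 : FiniteDimensional ℂ (LinearMap.ker (f.prod g)) :=
    Submodule.finiteDimensional_of_le hle
  have h2 : FiniteDimensional ℂ (X ⧸ LinearMap.ker (f.prod g)) :=
    LinearEquiv.finiteDimensional (f.prod g).quotKerEquivRange.symm
  exact hX (fd_of_ker_quot h1 h2)

end E

section F
variable {X : Type*} [NormedAddCommGroup X] [NormedSpace ℂ X]

lemma smul_solve {b : ℂ} (hb : b ≠ 0) {z w : X} (h : b • z + w = 0) : z = -b⁻¹ • w := by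
  have h1 : b • z = -w := eq_neg_of_add_eq_zero_left h
  apply smul_right_injective X hb
  show b • z = b • (-b⁻¹ • w)
  rw [smul_smul, show b * -b⁻¹ = -1 by field_simp, h1]
  module

lemma half_one_jordan (C : X →L[ℂ] X) :
    C * ((2⁻¹ : ℂ) • (1 : X →L[ℂ] X)) + ((2⁻¹ : ℂ) • (1 : X →L[ℂ] X)) * C = C := by
  ext z
  simp only [ContinuousLinearMap.add_apply, ContinuousLinearMap.mul_apply,
    ContinuousLinearMap.smul_apply, ContinuousLinearMap.one_apply, map_smul]
  rw [← add_smul]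
  norm_num

lemma core_self_line {x : X} {k : X →L[ℂ] ℂ} {C : X →L[ℂ] X}
    (hC : ∀ z, C z = k z • x) (hkx : k x ≠ 0) :
    analyticCore C = (Submodule.span ℂ {x} : Set X) := by
  apply Set.Subset.antisymm
  · intro z hz
    obtain ⟨y, hy⟩ := core_exists_one hz
    exact Submodule.mem_span_singleton.2 ⟨k y, by rw [← hy, hC]⟩
  · intro z hz
    obtain ⟨a, ha⟩ := Submodule.mem_span_singleton.1 hz
    rw [← ha]
    exact smul_mem_core (eigen_mem_core hkx (hC x)) a

lemma line_construct {x : X} (hx : x ≠ 0) {k : X →L[ℂ] ℂ} {C : X →L[ℂ] X}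
    (hC : ∀ z, C z = k z • x) {u : X} (hu : k u = 1) {v : X}
    (hv : v ∉ Submodule.span ℂ {x}) (hkv : k v ≠ 0) (hkx : k x ≠ 0) :
    ∃ T, analyticCore (C*T + T*C) = (Submodule.span ℂ {v} : Set X) := by
  set β := k x with hβ
  set τ := k v / 2 with hτd
  have hτ : τ ≠ 0 := div_ne_zero hkv two_ne_zero
  set w := v - (τ * β⁻¹) • x with hw
  have hkw : k w = τ := by
    rw [hw, map_sub, map_smul, smul_eq_mul, ← hβ, hτd]
    field_simp
    ring
  have hwv : w ∉ Submodule.span ℂ {x} := by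
    intro hmem
    apply hv
    have hve : v = w + (τ * β⁻¹) • x := by rw [hw]; module
    rw [hve]
    exact Submodule.add_mem _ hmem (Submodule.smul_mem _ _ (Submodule.mem_span_singleton_self x))
  obtain ⟨φ, ψ, hφx, hφw, hψx, hψw⟩ := exists_dual_pair (indep_of_not_mem_span hx hwv)
  set gt := τ • φ + (τ * τ * β⁻¹) • ψ with hgt
  have hgtx : gt x = k w := by
    rw [hgt, hkw]
    simp only [ContinuousLinearMap.add_apply, ContinuousLinearMap.smul_apply, smul_eq_mul,
      hφx, hψx]
    ring
  have hgtw : gt w = τ * τ * β⁻¹ := by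
    rw [hgt]
    simp only [ContinuousLinearMap.add_apply, ContinuousLinearMap.smul_apply, smul_eq_mul,
      hφw, hψw]
    ring
  obtain ⟨T, hTx, hkT, hA⟩ := realize hC u hu φ hφx w gt hgtx
  refine ⟨T, ?_⟩
  rcases classify hx hC T with ⟨ht0, h0⟩ | ⟨hdet, ht, hc, hkv', hsp⟩ | ⟨hdet, _, _, _⟩
  · exfalso
    rw [hTx, hkw] at ht0
    exact hτ ht0
  · rw [hsp, hTx, hkw, ← hβ]
    have hββ : β * (τ * β⁻¹) = τ := by field_simp
    have hvec : τ • x + β • w = β • v := by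
      rw [hw]
      calc τ • x + β • (v - (τ * β⁻¹) • x) = β • v + (τ - β * (τ * β⁻¹)) • x := by module
        _ = β • v := by rw [hββ, sub_self, zero_smul, add_zero]
    rw [hvec]
    exact congrArg _ (Submodule.span_singleton_smul_eq (IsUnit.mk0 β hkx) v)
  · exfalso
    apply hdet
    rw [hTx, hkT w, hkw, hgtw, ← hβ]
    field_simp
    ring

lemma plane_construct {x : X} (hx : x ≠ 0) {k : X →L[ℂ] ℂ} {C : X →L[ℂ] X}
    (hC : ∀ z, C z = k z • x) {u : X} (hu : k u = 1) {v : X}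
    (hv : v ∉ Submodule.span ℂ {x}) (hkv : k v ≠ 0) (hkx : k x = 0) :
    ∃ T, analyticCore (C*T + T*C) = (Submodule.span ℂ {x, v} : Set X) := by
  obtain ⟨φ, ψ, hφx, hφv, hψx, hψv⟩ := exists_dual_pair (indep_of_not_mem_span hx hv)
  set gt := (k v) • φ with hgt
  have hgtx : gt x = k v := by
    rw [hgt]
    simp only [ContinuousLinearMap.smul_apply, smul_eq_mul, hφx]
    ring
  obtain ⟨T, hTx, hkT, hA⟩ := realize hC u hu φ hφx v gt hgtx
  refine ⟨T, ?_⟩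
  rcases classify hx hC T with ⟨ht0, h0⟩ | ⟨hdet, ht, hc, hkv', hsp⟩ | ⟨_, _, _, hsp⟩
  · exfalso
    rw [hTx] at ht0
    exact hkv ht0
  · exact absurd hkx hc
  · rw [hsp, hTx]

end F

section G
variable {X : Type*} [NormedAddCommGroup X] [NormedSpace ℂ X]

lemma core_zero' : analyticCore (0 : X →L[ℂ] X) = {0} := by
  apply Set.eq_singleton_iff_unique_mem.2
  refine ⟨zero_mem_core 0, fun z hz => ?_⟩
  obtain ⟨y, hy⟩ := core_exists_one hz
  simpa using hy.symm

lemma same_c (B : X →L[ℂ] X) {x w₁ w₂ : X}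
    (hind : ∀ a b e : ℂ, a • w₁ + b • w₂ + e • x = 0 → a = 0 ∧ b = 0 ∧ e = 0)
    {c₁ d₁ c₂ d₂ c₃ d₃ : ℂ}
    (h₁ : B w₁ = c₁ • w₁ + d₁ • x) (h₂ : B w₂ = c₂ • w₂ + d₂ • x)
    (h₃ : B (w₁ + w₂) = c₃ • (w₁ + w₂) + d₃ • x) : c₁ = c₃ ∧ c₂ = c₃ := by
  have hb : (c₁ • w₁ + d₁ • x) + (c₂ • w₂ + d₂ • x) - (c₃ • (w₁ + w₂) + d₃ • x) = 0 := by
    rw [← h₁, ← h₂, ← h₃, ← map_add, sub_self]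
  have h0 : (c₁ - c₃) • w₁ + (c₂ - c₃) • w₂ + (d₁ + d₂ - d₃) • x = 0 := by
    rw [show (c₁ - c₃) • w₁ + (c₂ - c₃) • w₂ + (d₁ + d₂ - d₃) • x
      = (c₁ • w₁ + d₁ • x) + (c₂ • w₂ + d₂ • x) - (c₃ • (w₁ + w₂) + d₃ • x) by module, hb]
  obtain ⟨e1, e2, _⟩ := hind _ _ _ h0
  exact ⟨sub_eq_zero.1 e1, sub_eq_zero.1 e2⟩

lemma indep3_of {x w z : X} (hx : x ≠ 0) (hw : w ∉ Submodule.span ℂ {x})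
    (hz : z ∉ Submodule.span ℂ {x, w}) :
    ∀ a b e : ℂ, a • w + b • z + e • x = 0 → a = 0 ∧ b = 0 ∧ e = 0 := by
  intro a b e h
  rcases eq_or_ne b 0 with hb | hb
  · subst hb
    rw [zero_smul, add_zero] at h
    have ha : a = 0 := by
      by_contra ha
      apply hw
      rw [smul_solve ha h]
      exact Submodule.smul_mem _ _ (Submodule.smul_mem _ _ (Submodule.mem_span_singleton_self x))
    refine ⟨ha, rfl, ?_⟩
    rw [ha, zero_smul, zero_add] at h
    exact (smul_eq_zero.1 h).resolve_right hx
  · exfalso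
    apply hz
    have h' : b • z + (a • w + e • x) = 0 := by
      rw [show b • z + (a • w + e • x) = a • w + b • z + e • x by module]
      exact h
    rw [smul_solve hb h']
    apply Submodule.smul_mem
    apply Submodule.add_mem
    · exact Submodule.smul_mem _ _ (Submodule.subset_span (by simp))
    · exact Submodule.smul_mem _ _ (Submodule.subset_span (by simp))

lemma main_core (hX : ¬ FiniteDimensional ℂ X)
    {x : X} (hx : x ≠ 0) {f : X →L[ℂ] ℂ} {u₀ : X} (hu₀ : f u₀ = 1)
    {F B : X →L[ℂ] X} (hF : ∀ z, F z = f z • x)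
    (hS : ∀ T : X →L[ℂ] X, ∃ T', analyticCore (B*T + T*B) = analyticCore (F*T' + T'*F))
    (hS' : ∀ T : X →L[ℂ] X, ∃ T', analyticCore (F*T + T*F) = analyticCore (B*T' + T'*B)) :
    ∃ lam : ℂ, lam ≠ 0 ∧ B = lam • F := by
  obtain ⟨ξ, hξ⟩ := SeparatingDual.exists_eq_one (R := ℂ) hx
  -- Step I: for y with (y, B y) independent, x lies in their span
  have key1 : ∀ y : X, Indep y (B y) → x ∈ Submodule.span ℂ {y, B y} := by
    intro y hy
    obtain ⟨φ, ψ, hφa, hφb, hψa, hψb⟩ := exists_dual_pair hy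
    set T := ψ.smulRight y with hT
    have hA : ∀ z, (B*T + T*B) z = ψ z • (B y) + (ψ.comp B) z • y := by
      intro z
      rw [hT]
      simp only [ContinuousLinearMap.add_apply, ContinuousLinearMap.mul_apply,
        ContinuousLinearMap.smulRight_apply, ContinuousLinearMap.comp_apply]
      rw [map_smul]
    have hdet : ψ (B y) * (ψ.comp B) y - ψ y * (ψ.comp B) (B y) ≠ 0 := by
      have h1 : (ψ.comp B) y = ψ (B y) := rfl
      rw [h1, hψb, hψa]
      simp
    have hcore : analyticCore (B*T+T*B) = (Submodule.span ℂ {B y, y} : Set X) := by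
      apply Set.Subset.antisymm
      · intro z hz
        obtain ⟨w, hw⟩ := core_exists_one hz
        exact Submodule.mem_span_pair.2 ⟨ψ w, (ψ.comp B) w, by rw [← hw, hA]⟩
      · exact span_pair_subset_core _ (B y) y ψ (ψ.comp B) hA hy.symm hdet
    obtain ⟨T', hT'⟩ := hS T
    rw [hcore] at hT'
    have h1 : B y ∈ analyticCore (F*T'+T'*F) := by
      rw [← hT']; exact Submodule.subset_span (by simp)
    have h2 : y ∈ analyticCore (F*T'+T'*F) := by
      rw [← hT']; exact Submodule.subset_span (by simp)
    have hxm := (dplane' hx hF T' hy.symm h1 h2).1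
    rw [← hT'] at hxm
    rw [show ({y, B y} : Set X) = {B y, y} from Set.pair_comm y (B y)]
    exact hxm
  -- Step II
  have key2 : ∀ y, y ∉ Submodule.span ℂ {x} → ∃ cc dd : ℂ, B y = cc • y + dd • x := by
    intro y hy
    by_cases hlin : Indep y (B y)
    · have hxm := key1 y hlin
      obtain ⟨a, b, hab⟩ := Submodule.mem_span_pair.1 hxm
      have hb : b ≠ 0 := by
        intro hb0
        apply hy
        rw [hb0, zero_smul, add_zero] at hab
        have ha : a ≠ 0 := by intro h0; apply hx; rw [← hab, h0, zero_smul]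
        exact Submodule.mem_span_singleton.2
          ⟨a⁻¹, by rw [← hab, smul_smul, inv_mul_cancel₀ ha, one_smul]⟩
      have h0 : b • (B y) + (a • y - x) = 0 := by
        rw [show b • (B y) + (a • y - x) = (a • y + b • B y) - x by module, hab, sub_self]
      refine ⟨-b⁻¹ * a, b⁻¹, ?_⟩
      rw [smul_solve hb h0]
      module
    · rw [Indep] at hlin
      push_neg at hlin
      obtain ⟨s, t, hst, hns⟩ := hlin
      rcases eq_or_ne t 0 with ht | ht
      · exfalso
        subst ht
        rw [zero_smul, add_zero] at hst
        have hs : s ≠ 0 := fun h0 => hns h0 rfl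
        have hy0 : y = 0 := (smul_eq_zero.1 hst).resolve_left hs
        apply hy
        rw [hy0]
        exact Submodule.zero_mem _
      · have h0 : t • (B y) + s • y = 0 := by rw [add_comm]; exact hst
        exact ⟨-t⁻¹ * s, 0, by rw [smul_solve ht h0]; module⟩
  obtain ⟨y₀, hy₀⟩ := exists_not_mem hX (Submodule.span ℂ {x})
  obtain ⟨c, d₀, hc0⟩ := key2 y₀ hy₀
  -- Step III: the coefficient c is uniform
  have key3 : ∀ y, y ∉ Submodule.span ℂ {x} → ∃ d : ℂ, B y = c • y + d • x := by
    intro y hy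
    haveI : FiniteDimensional ℂ (Submodule.span ℂ ({x, y₀, y} : Set X)) :=
      FiniteDimensional.span_of_finite ℂ (Set.toFinite _)
    obtain ⟨z, hz⟩ := exists_not_mem hX (Submodule.span ℂ ({x, y₀, y} : Set X))
    have hz1 : z ∉ Submodule.span ℂ {x, y₀} := fun hmem =>
      hz (Submodule.span_mono (by intro w hw; simp at hw ⊢; tauto) hmem)
    have hz2 : z ∉ Submodule.span ℂ {x, y} := fun hmem =>
      hz (Submodule.span_mono (by intro w hw; simp at hw ⊢; tauto) hmem)
    have hzx : z ∉ Submodule.span ℂ {x} := fun hmem =>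
      hz (Submodule.span_mono (by intro w hw; simp at hw ⊢; tauto) hmem)
    have hind1 := indep3_of hx hy₀ hz1
    have hind2 := indep3_of hx hy hz2
    obtain ⟨cz, dz, hcz⟩ := key2 z hzx
    have hy0z : y₀ + z ∉ Submodule.span ℂ {x} := by
      intro hmem
      obtain ⟨e, he⟩ := Submodule.mem_span_singleton.1 hmem
      have h0 : (1:ℂ) • y₀ + (1:ℂ) • z + (-e) • x = 0 := by
        rw [one_smul, one_smul, ← he]
        module
      exact one_ne_zero (hind1 1 1 (-e) h0).1
    obtain ⟨c₃, d₃, h₃⟩ := key2 (y₀ + z) hy0z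
    obtain ⟨e1, e2⟩ := same_c B hind1 hc0 hcz h₃
    have hy_z : y + z ∉ Submodule.span ℂ {x} := by
      intro hmem
      obtain ⟨e, he⟩ := Submodule.mem_span_singleton.1 hmem
      have h0 : (1:ℂ) • y + (1:ℂ) • z + (-e) • x = 0 := by
        rw [one_smul, one_smul, ← he]
        module
      exact one_ne_zero (hind2 1 1 (-e) h0).1
    obtain ⟨c₄, d₄, h₄⟩ := key2 (y + z) hy_z
    obtain ⟨cy, dy, hcy⟩ := key2 y hy
    obtain ⟨e3, e4⟩ := same_c B hind2 hcy hcz h₄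
    refine ⟨dy, ?_⟩
    rw [hcy, show cy = c by rw [e3, ← e4, e2, ← e1]]
  have hxy₀ : x + y₀ ∉ Submodule.span ℂ {x} := by
    intro hmem
    apply hy₀
    have h1 : y₀ = (x + y₀) - x := by module
    rw [h1]
    exact Submodule.sub_mem _ hmem (Submodule.mem_span_singleton_self x)
  obtain ⟨d₁, hd₁⟩ := key3 (x + y₀) hxy₀
  obtain ⟨d₂, hd₂⟩ := key3 y₀ hy₀
  have hBx : B x = c • x + (d₁ - d₂) • x := by
    have h1 : B x = B (x + y₀) - B y₀ := by rw [map_add, add_sub_cancel_right]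
    rw [h1, hd₁, hd₂]
    module
  have key4 : ∀ y, ∃ d : ℂ, B y = c • y + d • x := by
    intro y
    by_cases hy : y ∈ Submodule.span ℂ {x}
    · obtain ⟨a, ha⟩ := Submodule.mem_span_singleton.1 hy
      refine ⟨a * (d₁ - d₂), ?_⟩
      rw [← ha, map_smul, hBx]
      module
    · exact key3 y hy
  -- Step IV: c = 0
  have hcz : c = 0 := by
    by_contra hcne
    set g : X →L[ℂ] ℂ := ξ.comp (B - c • (1 : X →L[ℂ] X)) with hgdef
    have hgy : ∀ y, B y = c • y + g y • x := by
      intro y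
      obtain ⟨d, hd⟩ := key4 y
      have hgyd : g y = d := by
        rw [hgdef]
        simp only [ContinuousLinearMap.comp_apply, ContinuousLinearMap.sub_apply,
          ContinuousLinearMap.smul_apply, ContinuousLinearMap.one_apply]
        rw [show B y - c • y = d • x by rw [hd]; module, map_smul, smul_eq_mul, hξ, mul_one]
      rw [hd, hgyd]
    obtain ⟨y, hfy, hgy0, hyx⟩ := exists_ker_ker_not_span hX
      (f : X →ₗ[ℂ] ℂ) (g : X →ₗ[ℂ] ℂ) x
    obtain ⟨φ, ψ, hφx, hφy, hψx, hψy⟩ := exists_dual_pair (indep_of_not_mem_span hx hyx)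
    set T := ψ.smulRight y with hT
    have hBy : B y = c • y := by
      rw [hgy y]
      rw [show g y = 0 from hgy0, zero_smul, add_zero]
    have hAz : ∀ z, (B*T + T*B) z = (2*c*(ψ z)) • y := by
      intro z
      rw [hT]
      simp only [ContinuousLinearMap.add_apply, ContinuousLinearMap.mul_apply,
        ContinuousLinearMap.smulRight_apply]
      rw [map_smul, hBy, hgy z]
      rw [map_add, map_smul, map_smul, smul_eq_mul, smul_eq_mul, hψx, mul_zero, add_zero]
      rw [smul_smul]
      rw [show ψ z * c = 2*c*(ψ z) - c * ψ z by ring]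
      module
    have hcore : analyticCore (B*T+T*B) = (Submodule.span ℂ {y} : Set X) := by
      apply Set.Subset.antisymm
      · intro z hz
        obtain ⟨w, hw⟩ := core_exists_one hz
        exact Submodule.mem_span_singleton.2 ⟨2*c*(ψ w), by rw [← hw, hAz]⟩
      · intro z hz
        obtain ⟨a, ha⟩ := Submodule.mem_span_singleton.1 hz
        rw [← ha]
        apply smul_mem_core
        apply eigen_mem_core (μ := 2*c) (mul_ne_zero two_ne_zero hcne)
        rw [hAz y, hψy, mul_one]
    obtain ⟨T', hT'⟩ := hS T
    rw [hcore] at hT'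
    have hy0 : y ≠ 0 := fun h0 => hyx (by rw [h0]; exact Submodule.zero_mem _)
    exact (dline hx hF T' hy0 hT'.symm).1 hfy
  -- Step V: B is rank one with range spanned by x
  set g : X →L[ℂ] ℂ := ξ.comp B with hgdef
  have hg : ∀ z, B z = g z • x := by
    intro z
    obtain ⟨d, hd⟩ := key4 z
    rw [hcz, zero_smul, zero_add] at hd
    have hgz : g z = d := by
      rw [hgdef]
      simp only [ContinuousLinearMap.comp_apply]
      rw [hd, map_smul, smul_eq_mul, hξ, mul_one]
    rw [hd, hgz]
  -- B is nonzero
  have hgne : ∃ u₁, g u₁ = 1 := by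
    have hFs : ∃ T : X →L[ℂ] X, x ∈ analyticCore (F*T + T*F) := by
      by_cases hfx : f x = 0
      · have hu₀x : u₀ ∉ Submodule.span ℂ {x} := by
          intro hmem
          obtain ⟨a, ha⟩ := Submodule.mem_span_singleton.1 hmem
          apply one_ne_zero (α := ℂ)
          rw [← hu₀, ← ha, map_smul, smul_eq_mul, hfx, mul_zero]
        have hfu : f u₀ ≠ 0 := by rw [hu₀]; exact one_ne_zero
        obtain ⟨T, hT⟩ := plane_construct hx hF hu₀ hu₀x hfu hfx
        exact ⟨T, by rw [hT]; exact Submodule.subset_span (by simp)⟩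
      · refine ⟨(2⁻¹ : ℂ) • 1, ?_⟩
        rw [half_one_jordan, core_self_line hF hfx]
        exact Submodule.mem_span_singleton_self x
    obtain ⟨T, hxT⟩ := hFs
    obtain ⟨T', hT'⟩ := hS' T
    rw [hT'] at hxT
    by_contra hg0
    push_neg at hg0
    have hgz : ∀ w, g w = 0 := by
      intro w
      by_contra hw
      exact hg0 ((g w)⁻¹ • w) (by rw [map_smul, smul_eq_mul, inv_mul_cancel₀ hw])
    have hB0 : B * T' + T' * B = 0 := by
      ext z
      simp only [ContinuousLinearMap.add_apply, ContinuousLinearMap.mul_apply,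
        ContinuousLinearMap.zero_apply]
      rw [hg (T' z), hg z, hgz, hgz, zero_smul, map_zero, add_zero]
    rw [hB0, core_zero'] at hxT
    exact hx hxT
  obtain ⟨u₁, hu₁⟩ := hgne
  -- transfer of "k x ≠ 0" between the two sides
  have dir1 : f x ≠ 0 → g x ≠ 0 := by
    intro hfx
    obtain ⟨T', hT'⟩ := hS' ((2⁻¹ : ℂ) • 1)
    rw [half_one_jordan, core_self_line hF hfx] at hT'
    exact (dline hx hg T' hx hT'.symm).1
  have dir2 : g x ≠ 0 → f x ≠ 0 := by
    intro hgx
    obtain ⟨T', hT'⟩ := hS ((2⁻¹ : ℂ) • 1)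
    rw [half_one_jordan, core_self_line hg hgx] at hT'
    exact (dline hx hF T' hx hT'.symm).1
  -- kernels agree
  have ker_fg : ∀ v, f v = 0 → g v = 0 := by
    intro v hfv
    by_contra hgv
    have hvx : v ∉ Submodule.span ℂ {x} := by
      intro hmem
      obtain ⟨a, ha⟩ := Submodule.mem_span_singleton.1 hmem
      have hgx : g x ≠ 0 := by
        intro h0; apply hgv; rw [← ha, map_smul, smul_eq_mul, h0, mul_zero]
      have ha0 : a ≠ 0 := by
        intro h0; apply hgv; rw [← ha, h0, zero_smul, map_zero]
      have hfveq : f v = a * f x := by rw [← ha, map_smul, smul_eq_mul]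
      exact dir2 hgx ((mul_eq_zero.1 (hfveq ▸ hfv)).resolve_left ha0)
    by_cases hgx : g x = 0
    · obtain ⟨T, hT⟩ := plane_construct hx hg hu₁ hvx hgv hgx
      obtain ⟨T', hT'⟩ := hS T
      rw [hT] at hT'
      have h1 : x ∈ analyticCore (F*T'+T'*F) := by
        rw [← hT']; exact Submodule.subset_span (by simp)
      have h2 : v ∈ analyticCore (F*T'+T'*F) := by
        rw [← hT']; exact Submodule.subset_span (by simp)
      obtain ⟨-, w, hw, hfw⟩ := dplane' hx hF T' (indep_of_not_mem_span hx hvx) h1 h2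
      have hfx : f x = 0 := by
        by_contra hfx; exact dir1 hfx hgx
      rw [← hT'] at hw
      obtain ⟨s, t, hst⟩ := Submodule.mem_span_pair.1 hw
      apply hfw
      rw [← hst, map_add, map_smul, map_smul, smul_eq_mul, smul_eq_mul, hfx, hfv]
      ring
    · obtain ⟨T, hT⟩ := line_construct hx hg hu₁ hvx hgv hgx
      obtain ⟨T', hT'⟩ := hS T
      rw [hT] at hT'
      have hv0 : v ≠ 0 := fun h0 => hgv (by rw [h0, map_zero])
      exact (dline hx hF T' hv0 hT'.symm).1 hfv
  have ker_gf : ∀ v, g v = 0 → f v = 0 := by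
    intro v hgv
    by_contra hfv
    have hvx : v ∉ Submodule.span ℂ {x} := by
      intro hmem
      obtain ⟨a, ha⟩ := Submodule.mem_span_singleton.1 hmem
      have hfx : f x ≠ 0 := by
        intro h0; apply hfv; rw [← ha, map_smul, smul_eq_mul, h0, mul_zero]
      have ha0 : a ≠ 0 := by
        intro h0; apply hfv; rw [← ha, h0, zero_smul, map_zero]
      have hgveq : g v = a * g x := by rw [← ha, map_smul, smul_eq_mul]
      exact (mul_ne_zero ha0 (dir1 hfx)) (hgveq ▸ hgv)
    by_cases hfx : f x = 0
    · obtain ⟨T, hT⟩ := plane_construct hx hF hu₀ hvx hfv hfx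
      obtain ⟨T', hT'⟩ := hS' T
      rw [hT] at hT'
      have h1 : x ∈ analyticCore (B*T'+T'*B) := by
        rw [← hT']; exact Submodule.subset_span (by simp)
      have h2 : v ∈ analyticCore (B*T'+T'*B) := by
        rw [← hT']; exact Submodule.subset_span (by simp)
      obtain ⟨-, w, hw, hgw⟩ := dplane' hx hg T' (indep_of_not_mem_span hx hvx) h1 h2
      have hgx0 : g x = 0 := by
        by_contra hgx; exact dir2 hgx hfx
      rw [← hT'] at hw
      obtain ⟨s, t, hst⟩ := Submodule.mem_span_pair.1 hw
      apply hgw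
      rw [← hst, map_add, map_smul, map_smul, smul_eq_mul, smul_eq_mul, hgx0, hgv]
      ring
    · obtain ⟨T, hT⟩ := line_construct hx hF hu₀ hvx hfv hfx
      obtain ⟨T', hT'⟩ := hS' T
      rw [hT] at hT'
      have hv0 : v ≠ 0 := fun h0 => hfv (by rw [h0, map_zero])
      exact (dline hx hg T' hv0 hT'.symm).1 hgv
  -- conclusion
  refine ⟨g u₀, ?_, ?_⟩
  · intro h0
    have := ker_gf u₀ h0
    rw [hu₀] at this
    exact one_ne_zero this
  · ext z
    rw [ContinuousLinearMap.smul_apply, hg, hF, smul_smul]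
    congr 1
    have h1 : f (z - f z • u₀) = 0 := by
      rw [map_sub, map_smul, smul_eq_mul, hu₀, mul_one, sub_self]
    have h2 := ker_fg _ h1
    rw [map_sub, map_smul, smul_eq_mul] at h2
    linear_combination h2

end G

theorem phi_rankOne_scalar {X : Type*} [NormedAddCommGroup X] [NormedSpace ℂ X]
    [CompleteSpace X] (hX : ¬ FiniteDimensional ℂ X)
    (phi : (X →L[ℂ] X) → (X →L[ℂ] X)) (hsurj : Function.Surjective phi)
    (hpres : ∀ T S : X →L[ℂ] X,
      analyticCore (phi T * phi S + phi S * phi T) = analyticCore (T * S + S * T)) :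
    ∀ F : X →L[ℂ] X, Module.rank ℂ (LinearMap.range (F : X →ₗ[ℂ] X)) = 1 →
      ∃ lam : ℂ, lam ≠ 0 ∧ phi F = lam • F := by
  intro F hrank
  obtain ⟨v₀, hv₀ne, hv₀span⟩ := rank_eq_one_iff.1 hrank
  set x : X := (v₀ : X) with hxdef
  have hx : x ≠ 0 := fun h0 => hv₀ne (by exact_mod_cast Subtype.ext h0)
  obtain ⟨ξ, hξ⟩ := SeparatingDual.exists_eq_one (R := ℂ) hx
  set f : X →L[ℂ] ℂ := ξ.comp F with hfdef
  have hF : ∀ z, F z = f z • x := by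
    intro z
    obtain ⟨r, hr⟩ := hv₀span ⟨F z, ⟨z, rfl⟩⟩
    have hr' : r • x = F z := by
      have h2 := congrArg (Subtype.val) hr
      simpa using h2
    have hfz : f z = r := by
      rw [hfdef]
      simp only [ContinuousLinearMap.comp_apply]
      rw [← hr', map_smul, smul_eq_mul, hξ, mul_one]
    rw [hfz, hr']
  have hfne : ∃ u₀, f u₀ = 1 := by
    by_contra h
    push_neg at h
    have hf0 : ∀ z, f z = 0 := by
      intro z
      by_contra hz
      exact h ((f z)⁻¹ • z) (by rw [map_smul, smul_eq_mul, inv_mul_cancel₀ hz])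
    apply hx
    obtain ⟨y, hy⟩ := v₀.2
    have hyx : F y = x := hy
    rw [← hyx, hF y, hf0 y, zero_smul]
  obtain ⟨u₀, hu₀⟩ := hfne
  have hS : ∀ T : X →L[ℂ] X, ∃ T',
      analyticCore (phi F * T + T * phi F) = analyticCore (F * T' + T' * F) := by
    intro T
    obtain ⟨S, hSdef⟩ := hsurj T
    exact ⟨S, by rw [← hSdef]; exact hpres F S⟩
  have hS' : ∀ T : X →L[ℂ] X, ∃ T',
      analyticCore (F * T + T * F) = analyticCore (phi F * T' + T' * phi F) :=
    fun T => ⟨phi T, (hpres F T).symm⟩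
  obtain ⟨lam, hlam, hBF⟩ := main_core hX hx hu₀ hF hS hS'
  exact ⟨lam, hlam, hBF⟩
end

section
/- Let X be a complex Banach space and T a bounded linear operator on X with the single-valued extension property. Then for x ∈ X, the inner local spectral radius i_T(x) equals 0 if and only if 0 belongs to the local spectrum σ_T(x); equivalently, x ∈ K(T) if and only if i_T(x) > 0, where K(T) is the analytic core. -/
/-- The glocal spectral subspace `X_T(F)` for a closed set `F ⊆ ℂ`. -/
def glocalSubspace {X : Type*} [NormedAddCommGroup X] [NormedSpace ℂ X]
    (T : X →L[ℂ] X) (F : Set ℂ) : Set X :=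
  {x | ∃ f : ℂ → X, AnalyticOnNhd ℂ f Fᶜ ∧ ∀ lam ∉ F, T (f lam) - lam • f lam = x}

/-- The local resolvent set of `T` at `x`. -/
def localResolvent {X : Type*} [NormedAddCommGroup X] [NormedSpace ℂ X]
    (T : X →L[ℂ] X) (x : X) : Set ℂ :=
  {lam | ∃ U : Set ℂ, IsOpen U ∧ lam ∈ U ∧ ∃ f : ℂ → X, AnalyticOnNhd ℂ f U ∧
    ∀ mu ∈ U, T (f mu) - mu • f mu = x}

/-- The local spectrum of `T` at `x`. -/
def localSpectrum {X : Type*} [NormedAddCommGroup X] [NormedSpace ℂ X]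
    (T : X →L[ℂ] X) (x : X) : Set ℂ :=
  (localResolvent T x)ᶜ

/-- The inner local spectral radius of `T` at `x`. -/
noncomputable def innerLocalRadius {X : Type*} [NormedAddCommGroup X] [NormedSpace ℂ X]
    (T : X →L[ℂ] X) (x : X) : ENNReal :=
  ⨆ r ∈ {r : ℝ | 0 ≤ r ∧ x ∈ glocalSubspace T {lam : ℂ | r ≤ ‖lam‖}},
    ENNReal.ofReal r

/-- The single-valued extension property. -/
def HasSVEP {X : Type*} [NormedAddCommGroup X] [NormedSpace ℂ X]
    (T : X →L[ℂ] X) : Prop :=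
  ∀ U : Set ℂ, IsOpen U → ∀ f : ℂ → X, AnalyticOnNhd ℂ f U →
    (∀ lam ∈ U, T (f lam) - lam • f lam = 0) → ∀ lam ∈ U, f lam = 0

/-- If `x` is in a glocal subspace avoiding a disc of positive radius, then `0` is in the
local resolvent set. -/
lemma aux_glocal_to_resolvent {X : Type*} [NormedAddCommGroup X] [NormedSpace ℂ X]
    (T : X →L[ℂ] X) (x : X) {r : ℝ} (hr : 0 < r)
    (hx : x ∈ glocalSubspace T {lam : ℂ | r ≤ ‖lam‖}) :
    (0 : ℂ) ∈ localResolvent T x := by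
  obtain ⟨f, hf, hfx⟩ := hx
  refine ⟨{lam : ℂ | ‖lam‖ < r}, isOpen_lt continuous_norm continuous_const, by simpa, f, ?_, ?_⟩
  · have : {lam : ℂ | r ≤ ‖lam‖}ᶜ = {lam : ℂ | ‖lam‖ < r} := by
      ext lam; simp [not_le]
    rwa [this] at hf
  · intro mu hmu
    exact hfx mu (by simpa [not_le] using hmu)

/-- If `0` is in the local resolvent set, then `x` lies in the analytic core. -/
lemma aux_resolvent_to_core {X : Type*} [NormedAddCommGroup X] [NormedSpace ℂ X]
    [CompleteSpace X] (T : X →L[ℂ] X) (x : X)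
    (h : (0 : ℂ) ∈ localResolvent T x) : x ∈ analyticCore T := by
  rcases eq_or_ne x 0 with rfl | hx0
  · exact ⟨1, one_pos, fun _ => 0, rfl, fun n => map_zero T, fun n => by simp⟩
  obtain ⟨U, hU, h0U, f, hf, hid⟩ := h
  obtain ⟨p, rp, hp⟩ := hf 0 h0U
  obtain ⟨ε, hε, hεU⟩ := EMetric.isOpen_iff.1 hU 0 h0U
  set r2 : ENNReal := min rp ε with hr2
  have hr2pos : 0 < r2 := lt_min hp.r_pos hε
  have hp2 : HasFPowerSeriesOnBall f p 0 r2 := hp.mono hr2pos (min_le_left _ _)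
  obtain ⟨r0, hr0pos, hr0lt⟩ := ENNReal.lt_iff_exists_nnreal_btwn.1 hr2pos
  rw [ENNReal.coe_pos] at hr0pos
  have hrad : (r0 : ENNReal) < p.radius := lt_of_lt_of_le hr0lt (le_trans (min_le_left _ _) hp.r_le)
  obtain ⟨C, hCpos, hC⟩ := p.norm_mul_pow_le_of_lt_radius hrad
  -- coefficients
  set a : ℕ → X := fun n => p.coeff n with ha
  have hcoeff_le : ∀ n, ‖a n‖ ≤ ‖p n‖ := by
    intro n
    have h := (p n).le_opNorm (fun _ => (1 : ℂ))
    have hco : a n = p n fun _ => (1 : ℂ) := rfl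
    rw [hco]
    simpa using h
  -- the shifted series
  set c : ℕ → X := fun n => Nat.rec x (fun m _ => a m) n with hc
  have hc0 : c 0 = x := rfl
  have hcs : ∀ n, c (n + 1) = a n := fun n => rfl
  set q : FormalMultilinearSeries ℂ ℂ X :=
    fun n => ContinuousMultilinearMap.mkPiRing ℂ (Fin n) (c n) with hq
  have hqnorm : ∀ n, ‖q n‖ = ‖c n‖ := fun n => ContinuousMultilinearMap.norm_mkPiRing _
  have hqapp : ∀ n (y : ℂ), (q n fun _ => y) = y ^ n • c n := by
    intro n y
    simp [hq, ContinuousMultilinearMap.mkPiRing_apply, Finset.prod_const]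
  have hqrad : (r0 : ENNReal) ≤ q.radius := by
    apply q.le_radius_of_bound (max ‖x‖ (C * r0))
    intro n
    rw [hqnorm]
    match n with
    | 0 => simpa [hc0] using le_max_left ‖x‖ (C * r0)
    | Nat.succ m =>
      refine le_trans ?_ (le_max_right ‖x‖ (C * r0))
      rw [hcs, pow_succ, ← mul_assoc]
      have h1 : ‖a m‖ * (r0 : ℝ) ^ m ≤ C := le_trans
        (mul_le_mul_of_nonneg_right (hcoeff_le m) (by positivity)) (hC m)
      exact mul_le_mul_of_nonneg_right h1 (by positivity)
  -- (fun y => x + y • f y) has power series q on ball r0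
  have hqball : HasFPowerSeriesOnBall (fun y => x + y • f y) q 0 (r0 : ENNReal) :=
    { r_le := hqrad
      r_pos := by exact_mod_cast hr0pos
      hasSum := by
        intro y hy
        have hy2 : y ∈ EMetric.ball (0 : ℂ) r2 := lt_trans hy hr0lt
        have hA := hp2.hasSum hy2
        rw [zero_add] at hA ⊢
        have hA' : HasSum (fun n => y ^ n • a n) (f y) := by
          refine hA.congr_fun fun n => ?_
          rw [FormalMultilinearSeries.apply_eq_pow_smul_coeff]
        have h2 : HasSum (fun n => y ^ (n + 1) • c (n + 1)) (y • f y) := by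
          have := hA'.const_smul y
          refine this.congr_fun fun n => ?_
          rw [hcs, pow_succ, mul_comm, mul_smul]
        have h3 : HasSum (fun n => y ^ n • c n) (y • f y + ∑ i ∈ Finset.range 1, y ^ i • c i) :=
          (hasSum_nat_add_iff 1).1 h2
        simp only [Finset.range_one, Finset.sum_singleton, pow_zero, one_smul, hc0] at h3
        rw [add_comm] at h3
        exact h3.congr_fun fun n => hqapp n y }
  -- T ∘ f has power series q
  have hball0 : EMetric.ball (0 : ℂ) (r0 : ENNReal) ⊆ U := fun z hz =>
    hεU (lt_of_lt_of_le (lt_trans hz hr0lt) (min_le_right _ _))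
  have hTf : HasFPowerSeriesOnBall (T ∘ f) q 0 (r0 : ENNReal) := by
    apply hqball.congr
    intro y hy
    have := hid y (hball0 hy)
    simp only [Function.comp_apply]
    rw [eq_comm, ← sub_eq_iff_eq_add']
    rw [sub_eq_iff_eq_add'] at this ⊢
    rw [this]
    abel
  have hTf2 : HasFPowerSeriesOnBall (T ∘ f) (T.compFormalMultilinearSeries p) 0 (r0 : ENNReal) :=
    T.comp_hasFPowerSeriesOnBall (hp2.mono (by exact_mod_cast hr0pos) hr0lt.le)
  have heq : T.compFormalMultilinearSeries p = q :=
    hTf2.hasFPowerSeriesAt.eq_formalMultilinearSeries hTf.hasFPowerSeriesAt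
  have hrel : ∀ n, T (a n) = c n := by
    intro n
    have := congrFun heq n
    have h2 := congrFun (congrArg DFunLike.coe this) (fun _ => (1 : ℂ))
    simp only [ContinuousLinearMap.compFormalMultilinearSeries_apply,
      ContinuousLinearMap.compContinuousMultilinearMap_coe, Function.comp_apply] at h2
    rw [hqapp n 1, one_pow, one_smul] at h2
    have hone : (p n fun _ => (1 : ℂ)) = a n := rfl
    rw [hone] at h2
    exact h2
  -- build the sequence
  set u : ℕ → X := fun n => Nat.rec x (fun m _ => a m) n with hu
  have hu0 : u 0 = x := rfl
  have hus : ∀ n, u (n + 1) = a n := fun n => rfl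
  have hux : ∀ n, T (u (n + 1)) = u n := by
    intro n
    rw [hus]
    match n with
    | 0 => rw [hrel 0, hc0, hu0]
    | Nat.succ m => rw [hrel (m + 1), hcs m, hus m]
  have hxpos : 0 < ‖x‖ := norm_pos_iff.2 hx0
  set δ : ℝ := max 1 (max (1 / (r0 : ℝ)) (C / ‖x‖)) with hδ
  have hδ1 : (1 : ℝ) ≤ δ := le_max_left _ _
  have hδr0 : 1 / (r0 : ℝ) ≤ δ := le_trans (le_max_left _ _) (le_max_right _ _)
  have hδC : C / ‖x‖ ≤ δ := le_trans (le_max_right _ _) (le_max_right _ _)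
  have hδpos : 0 < δ := lt_of_lt_of_le one_pos hδ1
  have hr0R : (0 : ℝ) < (r0 : ℝ) := hr0pos
  have hδr0' : (1 : ℝ) ≤ δ * (r0 : ℝ) := by
    rw [div_le_iff₀ hr0R] at hδr0
    linarith
  have hδC' : C ≤ δ * ‖x‖ := by
    rw [div_le_iff₀ hxpos] at hδC
    linarith
  refine ⟨δ, hδpos, u, hu0, hux, ?_⟩
  intro n
  match n with
  | 0 => simp [hu0]
  | Nat.succ m =>
    rw [hus]
    have h1 : ‖a m‖ * (r0 : ℝ) ^ m ≤ C := le_trans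
      (mul_le_mul_of_nonneg_right (hcoeff_le m) (by positivity)) (hC m)
    have h2 : (1 : ℝ) ≤ (δ * (r0 : ℝ)) ^ m := one_le_pow₀ hδr0'
    have h3 : C ≤ δ ^ (m + 1) * ‖x‖ * (r0 : ℝ) ^ m := by
      calc C ≤ δ * ‖x‖ := hδC'
        _ ≤ δ * ‖x‖ * (δ * (r0 : ℝ)) ^ m := le_mul_of_one_le_right (by positivity) h2
        _ = δ ^ (m + 1) * ‖x‖ * (r0 : ℝ) ^ m := by ring
    exact le_of_mul_le_mul_right (le_trans h1 h3) (pow_pos hr0R m)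

/-- If `x` is in the analytic core, it lies in a glocal subspace avoiding a disc of
positive radius. -/
lemma aux_core_to_glocal {X : Type*} [NormedAddCommGroup X] [NormedSpace ℂ X]
    [CompleteSpace X] (T : X →L[ℂ] X) (x : X)
    (h : x ∈ analyticCore T) :
    ∃ r : ℝ, 0 < r ∧ x ∈ glocalSubspace T {lam : ℂ | r ≤ ‖lam‖} := by
  obtain ⟨δ, hδ, u, hu0, hTu, hub⟩ := h
  set p : FormalMultilinearSeries ℂ ℂ X :=
    fun n => ContinuousMultilinearMap.mkPiRing ℂ (Fin n) (u (n + 1)) with hp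
  have hpapp : ∀ n (y : ℂ), (p n fun _ => y) = y ^ n • u (n + 1) := by
    intro n y
    simp [hp, ContinuousMultilinearMap.mkPiRing_apply, Finset.prod_const]
  set r : ℝ := 1 / (2 * δ) with hr
  have hrpos : 0 < r := by positivity
  have hrnn : (0 : ℝ) ≤ r := hrpos.le
  have hprad : (r.toNNReal : ENNReal) ≤ p.radius := by
    apply p.le_radius_of_bound (δ * ‖x‖)
    intro n
    have hnorm : ‖p n‖ = ‖u (n + 1)‖ := ContinuousMultilinearMap.norm_mkPiRing _
    rw [hnorm]
    have hcoe : ((r.toNNReal : ℝ)) = r := Real.coe_toNNReal r hrnn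
    rw [hcoe]
    calc ‖u (n + 1)‖ * r ^ n ≤ δ ^ (n + 1) * ‖x‖ * r ^ n :=
          mul_le_mul_of_nonneg_right (hub (n + 1)) (by positivity)
      _ = δ * ‖x‖ * (δ * r) ^ n := by ring
      _ ≤ δ * ‖x‖ * 1 := by
          refine mul_le_mul_of_nonneg_left (pow_le_one₀ (by positivity) ?_) (by positivity)
          rw [hr, mul_one_div, div_le_one (by positivity)]
          linarith
      _ = δ * ‖x‖ := mul_one _
  have hrad_pos : (0 : ENNReal) < p.radius := lt_of_lt_of_le (by
    simpa using (ENNReal.coe_pos.2 (Real.toNNReal_pos.2 hrpos))) hprad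
  have hball := p.hasFPowerSeriesOnBall hrad_pos
  refine ⟨r, hrpos, p.sum, ?_, ?_⟩
  · -- analyticity on the complement
    have hsub : {lam : ℂ | r ≤ ‖lam‖}ᶜ ⊆ EMetric.ball (0 : ℂ) p.radius := by
      intro lam hlam
      simp only [Set.mem_compl_iff, Set.mem_setOf_eq, not_le] at hlam
      have h1 : ‖lam‖₊ < r.toNNReal := by
        rw [← NNReal.coe_lt_coe, coe_nnnorm, Real.coe_toNNReal r hrnn]
        exact hlam
      have : edist lam 0 < (r.toNNReal : ENNReal) := by
        rw [edist_zero_right]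
        exact_mod_cast h1
      exact lt_of_lt_of_le this hprad
    exact fun lam hlam => hball.analyticOnNhd _ (hsub hlam)
  · intro lam hlam
    simp only [Set.mem_setOf_eq, not_le] at hlam
    have hmem : lam ∈ EMetric.ball (0 : ℂ) p.radius := by
      refine lt_of_lt_of_le ?_ hprad
      have h1 : ‖lam‖₊ < r.toNNReal := by
        rw [← NNReal.coe_lt_coe, coe_nnnorm, Real.coe_toNNReal r hrnn]
        exact hlam
      rw [edist_zero_right]
      exact_mod_cast h1
    have hA := hball.hasSum hmem
    rw [zero_add] at hA
    have hA' : HasSum (fun n => lam ^ n • u (n + 1)) (p.sum lam) :=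
      hA.congr_fun fun n => (hpapp n lam).symm
    set g : ℕ → X := fun n => lam ^ n • u n with hg
    have hTS : HasSum g (T (p.sum lam)) := by
      have := T.hasSum hA'
      refine this.congr_fun fun n => ?_
      rw [map_smul, hTu n]
    have hshift : HasSum (fun n => g (n + 1)) (lam • p.sum lam) := by
      have := hA'.const_smul lam
      refine this.congr_fun fun n => ?_
      rw [hg]
      simp only [pow_succ, mul_comm, mul_smul]
    have hshift2 : HasSum (fun n => g (n + 1))
        (T (p.sum lam) - ∑ i ∈ Finset.range 1, g i) := (hasSum_nat_add_iff' 1).2 hTS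
    have huniq := hshift.unique hshift2
    simp only [Finset.range_one, Finset.sum_singleton, hg, pow_zero, one_smul, hu0] at huniq
    rw [eq_sub_iff_add_eq] at huniq
    rw [sub_eq_iff_eq_add']
    rw [← huniq]

theorem innerLocalRadius_eq_zero_iff {X : Type*} [NormedAddCommGroup X] [NormedSpace ℂ X]
    [CompleteSpace X] (T : X →L[ℂ] X) (hT : HasSVEP T) (x : X) :
    (innerLocalRadius T x = 0 ↔ (0 : ℂ) ∈ localSpectrum T x) ∧
    (x ∈ analyticCore T ↔ 0 < innerLocalRadius T x) := by
  have key2 : x ∈ analyticCore T → 0 < innerLocalRadius T x := by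
    intro h
    obtain ⟨r, hrpos, hmem⟩ := aux_core_to_glocal T x h
    have hle : ENNReal.ofReal r ≤ innerLocalRadius T x :=
      le_iSup₂_of_le r ⟨hrpos.le, hmem⟩ le_rfl
    exact lt_of_lt_of_le (by simpa [ENNReal.ofReal_pos] using hrpos) hle
  have key1 : 0 < innerLocalRadius T x ↔ (0 : ℂ) ∈ localResolvent T x := by
    constructor
    · intro h
      by_contra hcon
      have hz : innerLocalRadius T x = 0 := by
        refine le_antisymm ?_ zero_le
        refine iSup₂_le fun r hr => ?_
        rcases le_or_gt r 0 with h' | h'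
        · simp [ENNReal.ofReal_eq_zero.2 h']
        · exact absurd (aux_glocal_to_resolvent T x h' hr.2) hcon
      rw [hz] at h
      exact lt_irrefl _ h
    · intro h
      exact key2 (aux_resolvent_to_core T x h)
  refine ⟨?_, ?_⟩
  · rw [localSpectrum, Set.mem_compl_iff, ← key1, not_lt]
    exact le_zero_iff.symm
  · exact ⟨key2, fun h => aux_resolvent_to_core T x (key1.1 h)⟩
end
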